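/- arXiv:1111.6822 — 5 statements merged into one kernel-verified Lean document; each statement's English description precedes it below -/
import Mathlib

section
/- Let X be a random vector in ℝⁿ with H(⌊X⌋) < ∞, and let 0 < ε < 1. Then dim_B^ε(P_X) ≥ d̄(X) − εn, where d̄(X) is the upper information dimension of X. -/
open MeasureTheory Filter Real
open scoped NNReal ENNReal Topology

/-- Euclidean (ℓ²) norm on `Fin n → ℝ`. -/
noncomputable def eNorm {n : ℕ} (x : Fin n → ℝ) : ℝ := Real.sqrt (∑ i, (x i) ^ 2)

/-- `δ`-covering number of a set `A ⊆ ℝⁿ` by Euclidean balls of radius `δ`. -/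
noncomputable def coverNum {n : ℕ} (A : Set (Fin n → ℝ)) (δ : ℝ) : ℝ≥0∞ :=
  sInf {c : ℝ≥0∞ | ∃ t : Finset (Fin n → ℝ),
    (t.card : ℝ≥0∞) = c ∧ A ⊆ ⋃ x ∈ t, {y | eNorm (y - x) < δ}}

/-- Upper Minkowski (box-counting) dimension of a set `A ⊆ ℝⁿ`. -/
noncomputable def upMinkDim {n : ℕ} (A : Set (Fin n → ℝ)) : ℝ :=
  Filter.limsup (fun δ : ℝ => Real.log (coverNum A δ).toReal / Real.log (1 / δ)) (𝓝[>] 0)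

/-- `ε`-Minkowski dimension of a Borel probability measure on `ℝⁿ`. -/
noncomputable def minkDimEps {n : ℕ} (μ : Measure (Fin n → ℝ)) (ε : ℝ) : ℝ :=
  sInf {d : ℝ | ∃ A : Set (Fin n → ℝ), A.Nonempty ∧ Bornology.IsBounded A ∧
    MeasurableSet A ∧ ENNReal.ofReal (1 - ε) ≤ μ A ∧ d = upMinkDim A}

/-- Shannon entropy (natural log) of a `Fin n → ℤ`-valued random variable `Y` on `(Ω, μ)`:
`H(Y) = ∑_z (-p_z log p_z)` where `p_z = μ(Y = z)`. -/
noncomputable def intEntropy {n : ℕ} {Ω : Type*} [MeasurableSpace Ω] (μ : Measure Ω)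
    (Y : Ω → (Fin n → ℤ)) : ℝ :=
  ∑' z : Fin n → ℤ, Real.negMulLog ((μ {ω | Y ω = z}).toReal)

/-- Upper information dimension of a random vector `X` in `ℝⁿ`:
`d̄(X) = limsup_{m → ∞} H(⌊mX⌋)/log m`, the floor taken componentwise. -/
noncomputable def upInfoDimVec {n : ℕ} {Ω : Type*} [MeasurableSpace Ω] (μ : Measure Ω)
    (X : Ω → (Fin n → ℝ)) : ℝ :=
  Filter.limsup
    (fun m : ℕ => intEntropy μ (fun ω i => ⌊(m : ℝ) * X ω i⌋) / Real.log m) Filter.atTop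


set_option maxHeartbeats 1600000

namespace Stmt2Aux
open Finset

lemma abs_coord_le_eNorm {n : ℕ} (v : Fin n → ℝ) (i : Fin n) : |v i| ≤ eNorm v := by
  rw [eNorm, ← Real.sqrt_sq_eq_abs]
  exact Real.sqrt_le_sqrt (Finset.single_le_sum (fun j _ => sq_nonneg (v j)) (Finset.mem_univ i))

lemma floor_ediv_of_floor_mul {m : ℕ} (hm : 0 < m) (x : ℝ) : ⌊x⌋ = ⌊(m:ℝ) * x⌋ / (m:ℤ) := by
  have hmZ : (0:ℤ) < (m:ℤ) := by exact_mod_cast hm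
  have hmR : (0:ℝ) < (m:ℝ) := by exact_mod_cast hm
  set z := ⌊(m:ℝ)*x⌋ with hz
  have h1 : (z:ℝ) ≤ (m:ℝ)*x := Int.floor_le _
  have h2 : (m:ℝ)*x < z+1 := Int.lt_floor_add_one _
  have ha : ((z / (m:ℤ) : ℤ) : ℝ) ≤ x := by
    have : (z / (m:ℤ)) * (m:ℤ) ≤ z := Int.ediv_mul_le z hmZ.ne'
    have hc : ((z / (m:ℤ) : ℤ) : ℝ) * (m:ℝ) ≤ (m:ℝ) * x := by
      calc ((z / (m:ℤ) : ℤ) : ℝ) * (m:ℝ) = (((z / (m:ℤ)) * (m:ℤ) : ℤ) : ℝ) := by push_cast; ring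
        _ ≤ (z:ℝ) := by exact_mod_cast this
        _ ≤ (m:ℝ)*x := h1
    nlinarith
  have hb : x < (z / (m:ℤ) : ℤ) + 1 := by
    have : z < (z / (m:ℤ) + 1) * (m:ℤ) := Int.lt_ediv_add_one_mul_self z hmZ
    have : z + 1 ≤ (z / (m:ℤ) + 1) * (m:ℤ) := this
    have hc : (m:ℝ)*x < ((z / (m:ℤ) : ℤ) + 1 : ℝ) * (m:ℝ) := by
      calc (m:ℝ)*x < (z:ℝ)+1 := h2
        _ ≤ ((z / (m:ℤ) : ℤ) + 1 : ℝ) * (m:ℝ) := by exact_mod_cast this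
    nlinarith
  rw [Int.floor_eq_iff]
  exact ⟨ha, hb⟩

lemma negMulLog_le_gibbs {p q : ℝ} (hp : 0 ≤ p) (hq : 0 ≤ q) (hpq : 0 < p → 0 < q) :
    Real.negMulLog p ≤ p * Real.log (1/q) + q := by
  rcases eq_or_lt_of_le hp with h | h
  · simp [← h, Real.negMulLog, hq]
  · have hq' := hpq h
    have hlog : Real.log (q / p) ≤ q / p - 1 := Real.log_le_sub_one_of_pos (by positivity)
    have : Real.negMulLog p = p * Real.log (1/p) := by
      rw [Real.negMulLog, one_div, Real.log_inv]; ring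
    rw [this]
    have hd : Real.log (1/p) - Real.log (1/q) = Real.log (q/p) := by
      rw [one_div, one_div, Real.log_inv, Real.log_inv, Real.log_div hq'.ne' h.ne']; ring
    have := mul_le_mul_of_nonneg_left hlog (le_of_lt h)
    have hqp : p * (q / p - 1) = q - p := by field_simp
    nlinarith [Real.log_div hq'.ne' h.ne']

variable {Ω : Type*} [MeasurableSpace Ω] (μ : Measure Ω) [IsProbabilityMeasure μ]
  {n : ℕ} {Y : Ω → (Fin n → ℤ)}

lemma sum_pY_le (hY : Measurable Y) (F : Finset (Fin n → ℤ)) {s : Set Ω}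
    (hsub : ∀ z ∈ F, {ω | Y ω = z} ⊆ s) :
    ∑ z ∈ F, (μ {ω | Y ω = z}).toReal ≤ (μ s).toReal := by
  have hmeas : ∀ z : Fin n → ℤ, MeasurableSet {ω | Y ω = z} := fun z =>
    hY (measurableSet_singleton z)
  have hdisj : (↑F : Set (Fin n → ℤ)).PairwiseDisjoint (fun z => {ω | Y ω = z}) := by
    intro a _ b _ hab
    exact Set.disjoint_left.2 fun ω ha hb => hab (by rw [← ha, ← hb])
  have h1 : ∑ z ∈ F, μ {ω | Y ω = z} = μ (⋃ z ∈ F, {ω | Y ω = z}) :=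
    (measure_biUnion_finset hdisj fun z _ => hmeas z).symm
  have h2 : μ (⋃ z ∈ F, {ω | Y ω = z}) ≤ μ s :=
    measure_mono (Set.iUnion₂_subset hsub)
  calc ∑ z ∈ F, (μ {ω | Y ω = z}).toReal
      = (∑ z ∈ F, μ {ω | Y ω = z}).toReal :=
        (ENNReal.toReal_sum fun z _ => measure_ne_top μ _).symm
    _ ≤ (μ s).toReal := by
        rw [h1]; exact ENNReal.toReal_mono (measure_ne_top μ s) h2

lemma sum_pY_le_one (hY : Measurable Y) (F : Finset (Fin n → ℤ)) :
    ∑ z ∈ F, (μ {ω | Y ω = z}).toReal ≤ 1 := by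
  have := sum_pY_le μ hY F (s := Set.univ) (fun z _ => Set.subset_univ _)
  simpa using this

lemma pY_le_one (z : Fin n → ℤ) : (μ {ω | Y ω = z}).toReal ≤ 1 :=
  ENNReal.toReal_mono (by simp) (prob_le_one)

lemma summable_pY (hY : Measurable Y) :
    Summable (fun z : Fin n → ℤ => (μ {ω | Y ω = z}).toReal) :=
  summable_of_sum_le (fun _ => ENNReal.toReal_nonneg) (sum_pY_le_one μ hY)

lemma exists_grid_cover {n : ℕ} (A : Set (Fin n → ℝ)) {R δ : ℝ} (hR : 0 < R) (hδ : 0 < δ)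
    (hA : A ⊆ Metric.closedBall 0 R) :
    ∃ t : Finset (Fin n → ℝ), (A ⊆ ⋃ x ∈ t, {y | eNorm (y - x) < δ}) ∧
      t.card ≤ (2 * ⌈R * (n+1) / δ⌉ + 1).toNat ^ n := by
  classical
  set s : ℝ := δ / (n+1) with hs
  have hn1 : (0:ℝ) < (n:ℝ) + 1 := by positivity
  have hs0 : 0 < s := by positivity
  set B : ℤ := ⌈R * (n+1) / δ⌉ with hB
  have hB0 : 0 < B := Int.ceil_pos.2 (by positivity)
  set c : (Fin n → ℤ) → (Fin n → ℝ) := fun z i => s * z i + s/2 with hc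
  refine ⟨(Fintype.piFinset fun _ : Fin n => Finset.Icc (-B) B).image c, ?_, ?_⟩
  · intro y hy
    have hyR : ∀ i, |y i| ≤ R := by
      intro i
      have := hA hy
      rw [Metric.mem_closedBall] at this
      have := (dist_pi_le_iff hR.le).1 this i
      simpa [Real.dist_eq] using this
    set z : Fin n → ℤ := fun i => ⌊y i / s⌋ with hz
    have hzmem : z ∈ Fintype.piFinset fun _ : Fin n => Finset.Icc (-B) B := by
      rw [Fintype.mem_piFinset]
      intro i
      rw [Finset.mem_Icc]
      have hys : y i / s = y i * ((n:ℝ)+1) / δ := by rw [hs, div_div_eq_mul_div]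
      have hyl := abs_le.1 (hyR i)
      constructor
      · have h1 : -(R * ((n:ℝ)+1) / δ) ≤ y i / s := by
          rw [hys]
          rw [show -(R * ((n:ℝ)+1) / δ) = -R * ((n:ℝ)+1) / δ by ring]
          gcongr
          exact hyl.1
        have h2 : (-B : ℝ) ≤ (z i : ℝ) := by
          have hfl : (⌊-(R * ((n:ℝ)+1) / δ)⌋ : ℤ) ≤ z i := Int.floor_le_floor h1
          have : (⌊-(R * ((n:ℝ)+1) / δ)⌋ : ℤ) = -B := by rw [Int.floor_neg, hB]
          rw [this] at hfl
          exact_mod_cast hfl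
        exact_mod_cast h2
      · have h1 : y i / s ≤ R * ((n:ℝ)+1) / δ := by
          rw [hys]; gcongr; exact hyl.2
        have h2 : (z i : ℝ) ≤ (B : ℝ) :=
          le_trans (Int.floor_le _) (le_trans h1 (Int.le_ceil _))
        exact_mod_cast h2
    refine Set.mem_iUnion₂.2 ⟨c z, Finset.mem_image_of_mem c hzmem, ?_⟩
    have hcoord : ∀ i, |y i - c z i| ≤ s/2 := by
      intro i
      have h1 : s * z i ≤ y i := by
        have : (z i : ℝ) ≤ y i / s := Int.floor_le _
        calc s * z i ≤ s * (y i / s) := by nlinarith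
          _ = y i := by field_simp
      have h2 : y i < s * z i + s := by
        have : y i / s < z i + 1 := Int.lt_floor_add_one _
        calc y i = s * (y i / s) := by field_simp
          _ < s * (z i + 1) := by nlinarith
          _ = s * z i + s := by ring
      rw [abs_le]; constructor <;> simp only [hc] <;> nlinarith
    show eNorm (y - c z) < δ
    rw [eNorm]
    have hsum : ∑ i, (y i - c z i)^2 ≤ (n:ℝ) * (s/2)^2 := by
      calc ∑ i, ((y - c z) i)^2 ≤ ∑ _i : Fin n, (s/2)^2 := by
            refine Finset.sum_le_sum fun i _ => ?_
            have := hcoord i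
            have h := abs_le.1 this
            simp only [Pi.sub_apply]
            nlinarith [hcoord i, sq_abs (y i - c z i)]
        _ = (n:ℝ) * (s/2)^2 := by simp [mul_comm]
    have : Real.sqrt (∑ i, ((y - c z) i)^2) ≤ Real.sqrt (((n:ℝ)+1)^2 * (s/2)^2) := by
      apply Real.sqrt_le_sqrt
      refine le_trans hsum ?_
      have h : (n:ℝ) ≤ ((n:ℝ)+1)^2 := by nlinarith [Nat.cast_nonneg (α := ℝ) n]
      nlinarith [sq_nonneg (s/2), Nat.cast_nonneg (α := ℝ) n]
    refine lt_of_le_of_lt this ?_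
    rw [show ((n:ℝ)+1)^2 * (s/2)^2 = (((n:ℝ)+1) * (s/2))^2 by ring,
      Real.sqrt_sq (by positivity)]
    rw [hs]
    rw [show ((n:ℝ)+1) * (δ/(n+1)/2) = δ/2 by field_simp]
    linarith
  · calc ((Fintype.piFinset fun _ : Fin n => Finset.Icc (-B) B).image c).card
        ≤ (Fintype.piFinset fun _ : Fin n => Finset.Icc (-B) B).card :=
          Finset.card_image_le
      _ = (2 * B + 1).toNat ^ n := by
          rw [Fintype.card_piFinset]
          simp [Int.card_Icc]
          congr 1
          omega

section CN
variable {n : ℕ} {A : Set (Fin n → ℝ)} {δ : ℝ}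

lemma coverNum_le {t : Finset (Fin n → ℝ)} (ht : A ⊆ ⋃ x ∈ t, {y | eNorm (y - x) < δ}) :
    coverNum A δ ≤ t.card :=
  sInf_le ⟨t, rfl, ht⟩

lemma one_le_coverNum (hA : A.Nonempty) : 1 ≤ coverNum A δ := by
  refine le_sInf fun c hc => ?_
  obtain ⟨t, rfl, ht⟩ := hc
  obtain ⟨a, ha⟩ := hA
  have h := ht ha
  simp only [Set.mem_iUnion, exists_prop] at h
  obtain ⟨x, hx, -⟩ := h
  have : 0 < t.card := Finset.card_pos.2 ⟨x, hx⟩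
  exact_mod_cast Nat.one_le_cast.2 this

lemma coverNum_attained (hA : A.Nonempty) (hb : Bornology.IsBounded A) (hδ : 0 < δ) :
    ∃ t : Finset (Fin n → ℝ), (A ⊆ ⋃ x ∈ t, {y | eNorm (y - x) < δ}) ∧
      (t.card : ℝ≥0∞) = coverNum A δ ∧ 1 ≤ t.card := by
  classical
  obtain ⟨R, hR⟩ := (Metric.isBounded_iff_subset_closedBall 0).1 hb
  have hR' : A ⊆ Metric.closedBall 0 (max R 1) :=
    hR.trans (Metric.closedBall_subset_closedBall (le_max_left _ _))
  obtain ⟨t0, ht0, _⟩ := exists_grid_cover A (lt_of_lt_of_le one_pos (le_max_right R 1)) hδ hR'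
  have hex : ∃ k : ℕ, ∃ t : Finset (Fin n → ℝ),
      t.card = k ∧ A ⊆ ⋃ x ∈ t, {y | eNorm (y - x) < δ} := ⟨t0.card, t0, rfl, ht0⟩
  classical
  obtain ⟨t, htc, ht⟩ := Nat.find_spec hex
  refine ⟨t, ht, ?_, ?_⟩
  · apply le_antisymm
    · refine le_sInf fun c hc => ?_
      obtain ⟨t', rfl, ht'⟩ := hc
      have : Nat.find hex ≤ t'.card := Nat.find_min' hex ⟨t', rfl, ht'⟩
      rw [htc]
      exact_mod_cast this
    · exact coverNum_le ht
  · obtain ⟨a, ha⟩ := hA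
    have h := ht ha
    simp only [Set.mem_iUnion, exists_prop] at h
    obtain ⟨x, hx, -⟩ := h
    exact Finset.card_pos.2 ⟨x, hx⟩
end CN

lemma coverNum_ne_top {n : ℕ} {A : Set (Fin n → ℝ)} {δ : ℝ} (hb : Bornology.IsBounded A)
    (hδ : 0 < δ) : coverNum A δ ≠ ⊤ := by
  obtain ⟨R, hR⟩ := (Metric.isBounded_iff_subset_closedBall 0).1 hb
  have hR' : A ⊆ Metric.closedBall 0 (max R 1) :=
    hR.trans (Metric.closedBall_subset_closedBall (le_max_left _ _))
  obtain ⟨t0, ht0, -⟩ := exists_grid_cover A (lt_of_lt_of_le one_pos (le_max_right R 1)) hδ hR'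
  exact ne_top_of_le_ne_top (by simp) (coverNum_le ht0)

lemma minkFun_boundedUnder {n : ℕ} {A : Set (Fin n → ℝ)} (hA : A.Nonempty)
    (hb : Bornology.IsBounded A) :
    IsBoundedUnder (· ≤ ·) (𝓝[>] (0:ℝ))
      (fun δ => Real.log (coverNum A δ).toReal / Real.log (1/δ)) := by
  obtain ⟨R0, hR0⟩ := (Metric.isBounded_iff_subset_closedBall 0).1 hb
  set R : ℝ := max R0 1 with hRdef
  have hR1 : (1:ℝ) ≤ R := le_max_right _ _
  have hRpos : (0:ℝ) < R := lt_of_lt_of_le one_pos hR1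
  have hR : A ⊆ Metric.closedBall 0 R :=
    hR0.trans (Metric.closedBall_subset_closedBall (le_max_left _ _))
  set K : ℝ := 2*R*(n+1)+3 with hKdef
  have hK1 : (1:ℝ) ≤ K := by nlinarith [Nat.cast_nonneg (α := ℝ) n]
  refine ⟨(n:ℝ) * Real.log K + n, ?_⟩
  rw [Filter.eventually_map]
  have hmem : Set.Ioo (0:ℝ) (Real.exp (-1)) ∈ 𝓝[>] (0:ℝ) :=
    Ioo_mem_nhdsGT_of_mem ⟨le_refl 0, by positivity⟩
  filter_upwards [hmem] with δ hδ
  obtain ⟨hδ0, hδe⟩ := hδ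
  have hδ1 : δ ≤ 1 := le_trans hδe.le (by
    have := Real.exp_le_exp.2 (show (-1:ℝ) ≤ 0 by norm_num)
    simpa using this)
  -- log (1/δ) ≥ 1
  have hlog1 : (1:ℝ) ≤ Real.log (1/δ) := by
    have hexp : Real.exp 1 ≤ 1/δ := by
      rw [le_div_iff₀ hδ0]
      calc Real.exp 1 * δ ≤ Real.exp 1 * Real.exp (-1) := by
            exact mul_le_mul_of_nonneg_left hδe.le (Real.exp_pos 1).le
        _ = Real.exp 0 := by rw [← Real.exp_add]; norm_num
        _ ≤ 1 := by simp
    calc (1:ℝ) = Real.log (Real.exp 1) := (Real.log_exp 1).symm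
      _ ≤ Real.log (1/δ) := Real.log_le_log (Real.exp_pos 1) hexp
  have hlogpos : 0 < Real.log (1/δ) := lt_of_lt_of_le one_pos hlog1
  -- covering bound
  obtain ⟨t0, ht0, hcard⟩ := exists_grid_cover A hRpos hδ0 hR
  set a : ℝ := R * (n+1) / δ with hadef
  have ha0 : 0 < a := by positivity
  have hceil : ((2 * ⌈a⌉ + 1).toNat : ℝ) ≤ K / δ := by
    have h1 : (0:ℤ) < ⌈a⌉ := Int.ceil_pos.2 ha0
    have h2 : ((2 * ⌈a⌉ + 1).toNat : ℝ) = 2 * (⌈a⌉:ℝ) + 1 := by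
      have hnn : (0:ℤ) ≤ 2*⌈a⌉+1 := by omega
      have h2' : (((2*⌈a⌉+1).toNat : ℤ) : ℝ) = 2*(⌈a⌉:ℝ)+1 := by
        rw [Int.toNat_of_nonneg hnn]; push_cast; ring
      exact_mod_cast h2'
    rw [h2]
    have h3 : (⌈a⌉:ℝ) < a + 1 := Int.ceil_lt_add_one a
    have h4 : K / δ = 2*R*((n:ℝ)+1)/δ + 3/δ := by rw [hKdef]; ring
    have h5 : (3:ℝ) ≤ 3/δ := by
      rw [le_div_iff₀ hδ0]; nlinarith
    have h6 : 2*a = 2*R*((n:ℝ)+1)/δ := by rw [hadef]; ring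
    nlinarith
  have hcN1 : (1:ℝ) ≤ (coverNum A δ).toReal := by
    have := one_le_coverNum (δ := δ) hA
    have h := ENNReal.toReal_mono (coverNum_ne_top hb hδ0) this
    simpa using h
  have hcNle : (coverNum A δ).toReal ≤ (K/δ)^n := by
    have h1 : coverNum A δ ≤ ((2 * ⌈a⌉ + 1).toNat ^ n : ℕ) :=
      le_trans (coverNum_le ht0) (by exact_mod_cast Nat.cast_le.2 hcard)
    have h2 := ENNReal.toReal_mono (by simp) h1
    simp only [ENNReal.toReal_natCast] at h2
    refine le_trans h2 ?_
    push_cast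
    exact pow_le_pow_left₀ (by positivity) hceil n
  have hlogcN : Real.log (coverNum A δ).toReal ≤ (n:ℝ) * (Real.log K + Real.log (1/δ)) := by
    calc Real.log (coverNum A δ).toReal ≤ Real.log ((K/δ)^n) :=
          Real.log_le_log (lt_of_lt_of_le one_pos hcN1) hcNle
      _ = (n:ℝ) * Real.log (K/δ) := by rw [Real.log_pow]
      _ = (n:ℝ) * (Real.log K + Real.log (1/δ)) := by
          rw [Real.log_div (by positivity) (ne_of_gt hδ0), one_div, Real.log_inv]
          ring
  have hlogK0 : 0 ≤ Real.log K := Real.log_nonneg hK1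
  calc Real.log (coverNum A δ).toReal / Real.log (1/δ)
      ≤ ((n:ℝ) * (Real.log K + Real.log (1/δ))) / Real.log (1/δ) := by
        gcongr
    _ = (n:ℝ) * Real.log K / Real.log (1/δ) + n := by
        field_simp
    _ ≤ (n:ℝ) * Real.log K + n := by
        have : (n:ℝ) * Real.log K / Real.log (1/δ) ≤ (n:ℝ) * Real.log K :=
          div_le_self (by positivity) hlog1
        linarith

lemma log_one_div_nonneg {r : ℝ} (h0 : 0 ≤ r) (h1 : r ≤ 1) : 0 ≤ Real.log (1/r) := by
  rcases eq_or_lt_of_le h0 with h | h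
  · simp [← h]
  · exact Real.log_nonneg (one_le_one_div h h1)

lemma sum_ite_not {α M : Type*} [AddCommMonoid M] [DecidableEq α] (F T : Finset α) (f : α → M) :
    ∑ z ∈ F, (if z ∈ T then 0 else f z) = ∑ z ∈ F.filter (fun z => ¬ z ∈ T), f z := by
  rw [Finset.sum_filter]
  refine Finset.sum_congr rfl fun z _ => ?_
  by_cases h : z ∈ T <;> simp [h]

theorem entropy_bound {μ : Measure Ω} [IsProbabilityMeasure μ] {X : Ω → (Fin n → ℝ)}
    (hX : Measurable X) {ε : ℝ} (hε : 0 ≤ ε) {m : ℕ} (hm : 1 ≤ m)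
    {A : Set (Fin n → ℝ)} (hAne : A.Nonempty)
    {t : Finset (Fin n → ℝ)} (ht : A ⊆ ⋃ x ∈ t, {y | eNorm (y - x) < 1/(m:ℝ)})
    (hAc : (μ {ω | X ω ∉ A}).toReal ≤ ε)
    (hHsum : Summable fun w : Fin n → ℤ =>
      Real.negMulLog ((μ {ω | (fun i => ⌊X ω i⌋) = w}).toReal)) :
    intEntropy μ (fun ω i => ⌊(m:ℝ) * X ω i⌋) ≤
      Real.log 2 + Real.log t.card + n * Real.log 5 + ε * (Real.log 2 + n * Real.log m)
      + (∑' w : Fin n → ℤ, Real.negMulLog ((μ {ω | (fun i => ⌊X ω i⌋) = w}).toReal)) + 1 := by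
  classical
  have hm0 : 0 < m := hm
  have hmR : (0:ℝ) < m := by exact_mod_cast hm0
  set Y : Ω → (Fin n → ℤ) := fun ω i => ⌊(m:ℝ) * X ω i⌋ with hYdef
  set Y1 : Ω → (Fin n → ℤ) := fun ω i => ⌊X ω i⌋ with hY1def
  have hYmeas : Measurable Y := by
    apply measurable_pi_lambda
    intro i
    exact Measurable.floor (((measurable_pi_apply i).comp hX).const_mul (m:ℝ))
  have hY1meas : Measurable Y1 := by
    apply measurable_pi_lambda
    intro i
    exact Measurable.floor ((measurable_pi_apply i).comp hX)
  set p : (Fin n → ℤ) → ℝ := fun z => (μ {ω | Y ω = z}).toReal with hpdef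
  set p1 : (Fin n → ℤ) → ℝ := fun w => (μ {ω | Y1 ω = w}).toReal with hp1def
  set g : (Fin n → ℤ) → (Fin n → ℤ) := fun z i => z i / (m:ℤ) with hgdef
  set Hval : ℝ := ∑' w : Fin n → ℤ, Real.negMulLog (p1 w) with hHvaldef
  have hp0 : ∀ z, 0 ≤ p z := fun z => ENNReal.toReal_nonneg
  have hp10 : ∀ w, 0 ≤ p1 w := fun w => ENNReal.toReal_nonneg
  have hp1le1 : ∀ w, p1 w ≤ 1 := fun w => pY_le_one μ w
  have hple1 : ∀ z, p z ≤ 1 := fun z => pY_le_one μ z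
  have hH : Summable (fun w => Real.negMulLog (p1 w)) := hHsum
  -- event inclusion
  have hsub : ∀ z : Fin n → ℤ, {ω | Y ω = z} ⊆ {ω | Y1 ω = g z} := by
    intro z ω hω
    have hω' : ∀ i, ⌊(m:ℝ) * X ω i⌋ = z i := fun i => congrFun hω i
    show Y1 ω = g z
    funext i
    rw [hY1def, hgdef]
    simp only
    rw [floor_ediv_of_floor_mul hm0 (X ω i), hω' i]
  have hp_le_p1 : ∀ z, p z ≤ p1 (g z) := fun z =>
    ENNReal.toReal_mono (measure_ne_top μ _) (measure_mono (hsub z))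
  -- fiber cardinality
  have hfiber : ∀ (F : Finset (Fin n → ℤ)) (w : Fin n → ℤ),
      (F.filter (fun z => g z = w)).card ≤ m ^ n := by
    intro F w
    have hsub2 : F.filter (fun z => g z = w) ⊆
        Fintype.piFinset (fun i => Finset.Ico ((w i) * m) ((w i + 1) * m)) := by
      intro z hz
      obtain ⟨-, hgz⟩ := Finset.mem_filter.1 hz
      rw [Fintype.mem_piFinset]
      intro i
      have hgzi : z i / (m:ℤ) = w i := congrFun hgz i
      rw [Finset.mem_Ico]
      constructor
      · calc w i * m = (z i / (m:ℤ)) * m := by rw [hgzi]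
          _ ≤ z i := Int.ediv_mul_le _ (by exact_mod_cast hm0.ne')
      · calc z i < (z i / (m:ℤ) + 1) * m := Int.lt_ediv_add_one_mul_self _ (by exact_mod_cast hm0)
          _ = (w i + 1) * m := by rw [hgzi]
    calc (F.filter (fun z => g z = w)).card
        ≤ (Fintype.piFinset (fun i => Finset.Ico ((w i) * m) ((w i + 1) * m))).card :=
          Finset.card_le_card hsub2
      _ = m ^ n := by
          rw [Fintype.card_piFinset]
          have : ∀ i : Fin n, (Finset.Ico ((w i) * m) ((w i + 1) * m)).card = m := by
            intro i
            rw [Int.card_Ico]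
            have : (w i + 1) * m - w i * m = m := by ring
            rw [this]
            simp
          simp [this]
  -- key fiberwise sum bound
  have hkey : ∀ F : Finset (Fin n → ℤ),
      ∑ z ∈ F, p z * Real.log (1 / p1 (g z)) ≤ Hval := by
    intro F
    rw [← Finset.sum_fiberwise_of_maps_to (fun z hz => Finset.mem_image_of_mem g hz)
      (fun z => p z * Real.log (1 / p1 (g z)))]
    have hinner : ∀ w ∈ F.image g,
        ∑ z ∈ F.filter (fun z => g z = w), p z * Real.log (1 / p1 (g z)) ≤
          Real.negMulLog (p1 w) := by
      intro w hw
      have : ∀ z ∈ F.filter (fun z => g z = w),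
          p z * Real.log (1 / p1 (g z)) = p z * Real.log (1 / p1 w) := by
        intro z hz
        rw [(Finset.mem_filter.1 hz).2]
      rw [Finset.sum_congr rfl this, ← Finset.sum_mul]
      have hsum_le : ∑ z ∈ F.filter (fun z => g z = w), p z ≤ p1 w := by
        apply sum_pY_le μ hYmeas
        intro z hz
        have := (Finset.mem_filter.1 hz).2
        rw [← this]
        exact hsub z
      have hlog := log_one_div_nonneg (hp10 w) (hp1le1 w)
      have : Real.negMulLog (p1 w) = p1 w * Real.log (1 / p1 w) := by
        rw [Real.negMulLog, one_div, Real.log_inv]; ring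
      rw [this]
      exact mul_le_mul_of_nonneg_right hsum_le hlog
    calc ∑ w ∈ F.image g, ∑ z ∈ F.filter (fun z => g z = w), p z * Real.log (1 / p1 (g z))
        ≤ ∑ w ∈ F.image g, Real.negMulLog (p1 w) := Finset.sum_le_sum hinner
      _ ≤ Hval := Summable.sum_le_tsum _ (fun w _ => Real.negMulLog_nonneg (hp10 w) (hp1le1 w)) hH
  -- T construction and the rest
  set T : Finset (Fin n → ℤ) := t.biUnion (fun x =>
    Fintype.piFinset fun i => Finset.Icc (⌊(m:ℝ) * x i⌋ - 2) (⌊(m:ℝ) * x i⌋ + 2)) with hTdef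
  -- cover membership
  have hYT : ∀ ω, X ω ∈ A → Y ω ∈ T := by
    intro ω hω
    have h := ht hω
    simp only [Set.mem_iUnion, exists_prop] at h
    obtain ⟨x, hx, hball⟩ := h
    rw [hTdef, Finset.mem_biUnion]
    refine ⟨x, hx, ?_⟩
    rw [Fintype.mem_piFinset]
    intro i
    simp only [hYdef]
    have hcoord : |X ω i - x i| ≤ eNorm (X ω - x) := by
      have := abs_coord_le_eNorm (X ω - x) i
      simpa using this
    have hlt : |X ω i - x i| < 1/(m:ℝ) := lt_of_le_of_lt hcoord hball
    have habs := abs_lt.1 hlt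
    have h1 : (m:ℝ) * X ω i ≤ (m:ℝ) * x i + 1 := by
      have : X ω i ≤ x i + 1/(m:ℝ) := by linarith [habs.2]
      calc (m:ℝ) * X ω i ≤ (m:ℝ) * (x i + 1/(m:ℝ)) := by nlinarith
        _ = (m:ℝ) * x i + 1 := by field_simp
    have h2 : (m:ℝ) * x i - 1 ≤ (m:ℝ) * X ω i := by
      have : x i - 1/(m:ℝ) ≤ X ω i := by linarith [habs.1]
      calc (m:ℝ) * x i - 1 = (m:ℝ) * (x i - 1/(m:ℝ)) := by field_simp
        _ ≤ (m:ℝ) * X ω i := by nlinarith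
    rw [Finset.mem_Icc]
    constructor
    · have := Int.floor_le_floor (R := ℝ) h2
      rw [show (m:ℝ) * x i - 1 = (m:ℝ) * x i + (-1 : ℤ) by push_cast; ring,
        Int.floor_add_intCast] at this
      omega
    · have := Int.floor_le_floor (R := ℝ) h1
      rw [show (m:ℝ) * x i + 1 = (m:ℝ) * x i + (1 : ℤ) by push_cast; ring,
        Int.floor_add_intCast] at this
      omega
  -- z ∉ T forces X ∉ A
  have hnotT : ∀ z : Fin n → ℤ, z ∉ T → {ω | Y ω = z} ⊆ {ω | X ω ∉ A} := by
    intro z hz ω hω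
    intro hA
    exact hz (hω ▸ hYT ω hA)
  -- t and T nonempty
  have htne : t.Nonempty := by
    obtain ⟨a, ha⟩ := hAne
    have h := ht ha
    simp only [Set.mem_iUnion, exists_prop] at h
    obtain ⟨x, hx, -⟩ := h
    exact ⟨x, hx⟩
  have hTne : T.Nonempty := by
    obtain ⟨x, hx⟩ := htne
    refine ⟨fun i => ⌊(m:ℝ) * x i⌋, ?_⟩
    rw [hTdef, Finset.mem_biUnion]
    refine ⟨x, hx, ?_⟩
    rw [Fintype.mem_piFinset]
    intro i
    rw [Finset.mem_Icc]
    omega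
  have hTcard : T.card ≤ t.card * 5 ^ n := by
    apply Finset.card_biUnion_le_card_mul
    intro x _
    rw [Fintype.card_piFinset]
    have : ∀ i : Fin n, (Finset.Icc (⌊(m:ℝ) * x i⌋ - 2) (⌊(m:ℝ) * x i⌋ + 2)).card = 5 := by
      intro i
      rw [Int.card_Icc]
      omega
    rw [Finset.prod_congr rfl (fun i _ => this i)]
    simp
  set cT : ℝ := (T.card : ℝ) with hcTdef
  have hcT1 : (1:ℝ) ≤ cT := by
    rw [hcTdef]
    exact_mod_cast Nat.one_le_cast.2 (Finset.card_pos.2 hTne)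
  have hmn0 : (0:ℝ) < (m:ℝ)^n := by positivity
  have hlogm0 : 0 ≤ Real.log m := Real.log_nonneg (by exact_mod_cast hm)
  -- the pieces
  set c2 : ℝ := Real.log 2 + n * Real.log m with hc2def
  have hc20 : 0 ≤ c2 := by
    rw [hc2def]
    have : (0:ℝ) ≤ Real.log 2 := Real.log_nonneg one_le_two
    positivity
  set B1 : (Fin n → ℤ) → ℝ := fun z => if z ∈ T then p z * Real.log (2 * cT) else 0 with hB1def
  set B2 : (Fin n → ℤ) → ℝ := fun z => if z ∈ T then 0 else p z * c2 with hB2def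
  set B3 : (Fin n → ℤ) → ℝ := fun z => if z ∈ T then 0 else p z * Real.log (1 / p1 (g z))
    with hB3def
  set q1 : (Fin n → ℤ) → ℝ := fun z => if z ∈ T then 1 / (2 * cT) else 0 with hq1def
  set q2 : (Fin n → ℤ) → ℝ := fun z => p1 (g z) / (2 * (m:ℝ)^n) with hq2def
  have hlog2cT : 0 ≤ Real.log (2 * cT) := Real.log_nonneg (by linarith)
  have hu0 : ∀ z, 0 ≤ p z * Real.log (1 / p1 (g z)) := fun z =>
    mul_nonneg (hp0 z) (log_one_div_nonneg (hp10 _) (hp1le1 _))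
  have Sp : Summable p := summable_pY μ hYmeas
  have Su : Summable (fun z => p z * Real.log (1 / p1 (g z))) :=
    summable_of_sum_le hu0 hkey
  have SB1 : Summable B1 := summable_of_ne_finset_zero (s := T)
    (fun z hz => by simp only [hB1def, if_neg hz])
  have Sq1 : Summable q1 := summable_of_ne_finset_zero (s := T)
    (fun z hz => by simp only [hq1def, if_neg hz])
  have SB2 : Summable B2 := by
    apply Summable.of_nonneg_of_le (fun z => ?_) (fun z => ?_) (Sp.mul_right c2)
    · simp only [hB2def]
      split_ifs
      · exact le_refl 0
      · exact mul_nonneg (hp0 z) hc20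
    · simp only [hB2def]
      split_ifs
      · exact mul_nonneg (hp0 z) hc20
      · exact le_refl _
  have SB3 : Summable B3 := by
    apply Summable.of_nonneg_of_le (fun z => ?_) (fun z => ?_) Su
    · simp only [hB3def]
      split_ifs
      · exact le_refl 0
      · exact hu0 z
    · simp only [hB3def]
      split_ifs
      · exact hu0 z
      · exact le_refl _
  have hq2sum : ∀ F : Finset (Fin n → ℤ), ∑ z ∈ F, q2 z ≤ 1/2 := by
    intro F
    have h1 : ∑ z ∈ F, p1 (g z) ≤ (m:ℝ)^n := by
      rw [← Finset.sum_fiberwise_of_maps_to (fun z hz => Finset.mem_image_of_mem g hz)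
        (fun z => p1 (g z))]
      have hinner : ∀ w ∈ F.image g,
          ∑ z ∈ F.filter (fun z => g z = w), p1 (g z) ≤ (m:ℝ)^n * p1 w := by
        intro w hw
        have hcongr : ∀ z ∈ F.filter (fun z => g z = w), p1 (g z) = p1 w := by
          intro z hz; rw [(Finset.mem_filter.1 hz).2]
        rw [Finset.sum_congr rfl hcongr, Finset.sum_const, nsmul_eq_mul]
        apply mul_le_mul_of_nonneg_right _ (hp10 w)
        calc ((F.filter (fun z => g z = w)).card : ℝ) ≤ ((m ^ n : ℕ) : ℝ) := by
              exact_mod_cast hfiber F w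
          _ = (m:ℝ)^n := by push_cast; ring
      calc ∑ w ∈ F.image g, ∑ z ∈ F.filter (fun z => g z = w), p1 (g z)
          ≤ ∑ w ∈ F.image g, (m:ℝ)^n * p1 w := Finset.sum_le_sum hinner
        _ = (m:ℝ)^n * ∑ w ∈ F.image g, p1 w := by rw [Finset.mul_sum]
        _ ≤ (m:ℝ)^n * 1 :=
            mul_le_mul_of_nonneg_left (sum_pY_le_one μ hY1meas _) hmn0.le
        _ = (m:ℝ)^n := mul_one _
    calc ∑ z ∈ F, q2 z = (∑ z ∈ F, p1 (g z)) / (2 * (m:ℝ)^n) := by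
          simp only [hq2def]
          rw [← Finset.sum_div]
      _ ≤ (m:ℝ)^n / (2 * (m:ℝ)^n) := by gcongr
      _ = 1/2 := by
          rw [div_eq_div_iff (by positivity) (by norm_num)]
          ring
  have Sq2 : Summable q2 := summable_of_sum_le
    (fun z => div_nonneg (hp10 _) (by positivity)) hq2sum
  -- pointwise bound
  have hptwise : ∀ z, Real.negMulLog (p z) ≤ B1 z + B2 z + B3 z + (q1 z + q2 z) := by
    intro z
    have hq20 : 0 ≤ q2 z := div_nonneg (hp10 _) (by positivity)
    by_cases hT : z ∈ T
    · have hq1z : q1 z = 1 / (2 * cT) := by simp only [hq1def, if_pos hT]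
      have hq1pos : 0 < q1 z := by rw [hq1z]; positivity
      have hg := negMulLog_le_gibbs (hp0 z) hq1pos.le (fun _ => hq1pos)
      have hlogq : Real.log (1 / q1 z) = Real.log (2 * cT) := by
        rw [hq1z, one_div_one_div]
      have hB1 : B1 z = p z * Real.log (2 * cT) := by simp only [hB1def, if_pos hT]
      have hB2 : B2 z = 0 := by simp only [hB2def, if_pos hT]
      have hB3 : B3 z = 0 := by simp only [hB3def, if_pos hT]
      rw [hB1, hB2, hB3]
      calc Real.negMulLog (p z) ≤ p z * Real.log (1 / q1 z) + q1 z := hg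
        _ = p z * Real.log (2 * cT) + q1 z := by rw [hlogq]
        _ ≤ p z * Real.log (2*cT) + 0 + 0 + (q1 z + q2 z) := by linarith
    · have hq1z : q1 z = 0 := by simp only [hq1def, if_neg hT]
      have hB1 : B1 z = 0 := by simp only [hB1def, if_neg hT]
      have hB2 : B2 z = p z * c2 := by simp only [hB2def, if_neg hT]
      have hB3 : B3 z = p z * Real.log (1 / p1 (g z)) := by simp only [hB3def, if_neg hT]
      by_cases hp : p z = 0
      · rw [hB1, hB2, hB3, hq1z, hp]
        simp [Real.negMulLog, hq20]
      · have hppos : 0 < p z := lt_of_le_of_ne (hp0 z) (Ne.symm hp)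
        have hp1pos : 0 < p1 (g z) := lt_of_lt_of_le hppos (hp_le_p1 z)
        have hq2pos : 0 < q2 z := by simp only [hq2def]; positivity
        have hg := negMulLog_le_gibbs (hp0 z) hq2pos.le (fun _ => hq2pos)
        have hlogq : Real.log (1 / q2 z) = c2 + Real.log (1 / p1 (g z)) := by
          simp only [hq2def]
          rw [one_div_div]
          rw [Real.log_div (by positivity) (ne_of_gt hp1pos)]
          rw [Real.log_mul (by norm_num) (hmn0.ne'), Real.log_pow]
          rw [hc2def, one_div, Real.log_inv]
          ring
        rw [hB1, hB2, hB3, hq1z]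
        calc Real.negMulLog (p z) ≤ p z * Real.log (1 / q2 z) + q2 z := hg
          _ = p z * c2 + p z * Real.log (1 / p1 (g z)) + q2 z := by rw [hlogq]; ring
          _ = 0 + p z * c2 + p z * Real.log (1/ p1 (g z)) + (0 + q2 z) := by ring
  have hRHSs : Summable (fun z => B1 z + B2 z + B3 z + (q1 z + q2 z)) :=
    ((SB1.add SB2).add SB3).add (Sq1.add Sq2)
  have hnml : Summable (fun z => Real.negMulLog (p z)) :=
    Summable.of_nonneg_of_le (fun z => Real.negMulLog_nonneg (hp0 z) (hple1 z)) hptwise hRHSs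
  have hEnt : intEntropy μ Y ≤ ∑' z, (B1 z + B2 z + B3 z + (q1 z + q2 z)) := by
    have hrfl : intEntropy μ Y = ∑' z, Real.negMulLog (p z) := rfl
    rw [hrfl]
    exact Summable.tsum_le_tsum hptwise hnml hRHSs
  have hsplit : ∑' z, (B1 z + B2 z + B3 z + (q1 z + q2 z)) =
      (∑' z, B1 z) + (∑' z, B2 z) + (∑' z, B3 z) + ((∑' z, q1 z) + (∑' z, q2 z)) := by
    rw [Summable.tsum_add ((SB1.add SB2).add SB3) (Sq1.add Sq2), Summable.tsum_add (SB1.add SB2) SB3,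
      Summable.tsum_add SB1 SB2, Summable.tsum_add Sq1 Sq2]
  have hB1sum : ∑' z, B1 z ≤ Real.log (2 * cT) := by
    rw [tsum_eq_sum (s := T) (fun z hz => by simp only [hB1def, if_neg hz])]
    have hcongr : ∀ z ∈ T, B1 z = p z * Real.log (2*cT) := by
      intro z hz; simp only [hB1def, if_pos hz]
    rw [Finset.sum_congr rfl hcongr, ← Finset.sum_mul]
    calc (∑ z ∈ T, p z) * Real.log (2*cT) ≤ 1 * Real.log (2*cT) :=
          mul_le_mul_of_nonneg_right (sum_pY_le_one μ hYmeas T) hlog2cT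
      _ = Real.log (2*cT) := one_mul _
  have hB2sum : ∑' z, B2 z ≤ ε * c2 := by
    apply Summable.tsum_le_of_sum_le SB2
    intro F
    have h1 : ∑ z ∈ F, B2 z = ∑ z ∈ F.filter (fun z => ¬ z ∈ T), p z * c2 :=
      sum_ite_not F T _
    rw [h1, ← Finset.sum_mul]
    have h2 : ∑ z ∈ F.filter (fun z => ¬ z ∈ T), p z ≤ ε := by
      refine le_trans (sum_pY_le μ hYmeas _ (s := {ω | X ω ∉ A}) ?_) hAc
      intro z hz
      exact hnotT z (Finset.mem_filter.1 hz).2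
    have h3 : 0 ≤ ∑ z ∈ F.filter (fun z => ¬ z ∈ T), p z :=
      Finset.sum_nonneg fun z _ => hp0 z
    exact mul_le_mul_of_nonneg_right h2 hc20 |>.trans_eq rfl
  have hB3sum : ∑' z, B3 z ≤ Hval := by
    apply Summable.tsum_le_of_sum_le SB3
    intro F
    calc ∑ z ∈ F, B3 z ≤ ∑ z ∈ F, p z * Real.log (1 / p1 (g z)) := by
          refine Finset.sum_le_sum fun z _ => ?_
          simp only [hB3def]
          split_ifs
          · exact hu0 z
          · exact le_refl _
      _ ≤ Hval := hkey F
  have hq1sum : ∑' z, q1 z = 1/2 := by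
    rw [tsum_eq_sum (s := T) (fun z hz => by simp only [hq1def, if_neg hz])]
    have hcongr : ∀ z ∈ T, q1 z = 1/(2*cT) := by
      intro z hz; simp only [hq1def, if_pos hz]
    rw [Finset.sum_congr rfl hcongr, Finset.sum_const, nsmul_eq_mul]
    rw [← hcTdef]
    have hcT0 : cT ≠ 0 := by linarith
    rw [mul_one_div]
    rw [div_eq_div_iff (by positivity) (by norm_num)]
    ring
  have hq2sum' : ∑' z, q2 z ≤ 1/2 := Summable.tsum_le_of_sum_le Sq2 hq2sum
  -- put together
  have hcardt1 : (1:ℝ) ≤ (t.card : ℝ) := by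
    exact_mod_cast Nat.one_le_cast.2 (Finset.card_pos.2 htne)
  have hlogT : Real.log (2 * cT) ≤
      Real.log 2 + Real.log (t.card) + n * Real.log 5 := by
    have h2cT : (2:ℝ) * cT ≤ 2 * (t.card * 5^n) := by
      have : cT ≤ ((t.card * 5 ^ n : ℕ) : ℝ) := by
        rw [hcTdef]; exact_mod_cast hTcard
      push_cast at this
      linarith
    have hlog := Real.log_le_log (by positivity) h2cT
    have hsplit2 : Real.log (2*((t.card:ℝ)*5^n)) =
        Real.log 2 + Real.log (t.card) + (n:ℝ) * Real.log 5 := by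
      rw [Real.log_mul (by norm_num) (by positivity),
        Real.log_mul (by positivity) (by positivity), Real.log_pow]
      ring
    rw [hsplit2] at hlog
    exact hlog
  have hfinal : intEntropy μ Y ≤
      Real.log 2 + Real.log t.card + n * Real.log 5 + ε * c2 + Hval + 1 := by
    calc intEntropy μ Y ≤ ∑' z, (B1 z + B2 z + B3 z + (q1 z + q2 z)) := hEnt
      _ = (∑' z, B1 z) + (∑' z, B2 z) + (∑' z, B3 z) + ((∑' z, q1 z) + (∑' z, q2 z)) := hsplit
      _ ≤ Real.log (2*cT) + ε * c2 + Hval + (1/2 + 1/2) := by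
          rw [hq1sum]
          have := add_le_add (add_le_add (add_le_add hB1sum hB2sum) hB3sum)
            (add_le_add (le_refl (1/2 : ℝ)) hq2sum')
          exact this
      _ = Real.log (2*cT) + ε * c2 + Hval + 1 := by ring
      _ ≤ Real.log 2 + Real.log t.card + n * Real.log 5 + ε * c2 + Hval + 1 := by linarith
  exact hfinal.trans_eq (by rw [hc2def])

variable {Ω : Type*} [MeasurableSpace Ω] {n : ℕ}

lemma dim_bound {μ : Measure Ω} [IsProbabilityMeasure μ] {X : Ω → (Fin n → ℝ)}
    (hX : Measurable X) {ε : ℝ} (hε : 0 ≤ ε)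
    (hHsum : Summable fun w : Fin n → ℤ =>
      Real.negMulLog ((μ {ω | (fun i => ⌊X ω i⌋) = w}).toReal))
    {A : Set (Fin n → ℝ)} (hAne : A.Nonempty) (hAbd : Bornology.IsBounded A)
    (hAc : (μ {ω | X ω ∉ A}).toReal ≤ ε) :
    upInfoDimVec μ X ≤ upMinkDim A + ε * n := by
  classical
  set Hval : ℝ := ∑' w : Fin n → ℤ,
    Real.negMulLog ((μ {ω | (fun i => ⌊X ω i⌋) = w}).toReal) with hHvdef
  have hHval0 : 0 ≤ Hval :=
    tsum_nonneg fun w => Real.negMulLog_nonneg ENNReal.toReal_nonneg (pY_le_one μ w)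
  set G : ℝ → ℝ := fun δ => Real.log (coverNum A δ).toReal / Real.log (1/δ) with hGdef
  have hGbd : IsBoundedUnder (· ≤ ·) (𝓝[>] (0:ℝ)) G := minkFun_boundedUnder hAne hAbd
  have hlog2 : (0:ℝ) ≤ Real.log 2 := Real.log_nonneg one_le_two
  have hlog5 : (0:ℝ) ≤ Real.log 5 := Real.log_nonneg (by norm_num)
  set K' : ℝ := Real.log 2 + n * Real.log 5 + ε * Real.log 2 + Hval + 1 with hK'def
  have hK'0 : 0 ≤ K' := by rw [hK'def]; positivity
  set u : ℕ → ℝ := fun m => intEntropy μ (fun ω i => ⌊(m:ℝ) * X ω i⌋) / Real.log m with hudef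
  have hu0 : ∀ m : ℕ, 2 ≤ m → 0 ≤ u m := by
    intro m hm
    have hH0 : 0 ≤ intEntropy μ (fun ω i => ⌊(m:ℝ) * X ω i⌋) :=
      tsum_nonneg fun z => Real.negMulLog_nonneg ENNReal.toReal_nonneg (pY_le_one μ z)
    have : 0 < Real.log m := Real.log_pos (by exact_mod_cast hm)
    exact div_nonneg hH0 this.le
  have hseq : ∀ m : ℕ, 2 ≤ m → u m ≤ G (1/(m:ℝ)) + ε * n + K' / Real.log m := by
    intro m hm2
    have hm1 : 1 ≤ m := le_trans one_le_two hm2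
    have hmR : (0:ℝ) < m := by exact_mod_cast lt_of_lt_of_le Nat.zero_lt_two hm2
    have hlogm : 0 < Real.log m := Real.log_pos (by exact_mod_cast hm2)
    obtain ⟨t, ht, htc, htc1⟩ := coverNum_attained hAne hAbd
      (show (0:ℝ) < 1/(m:ℝ) by positivity)
    have hEB := entropy_bound hX hε hm1 hAne ht hAc hHsum
    have hlogtc : Real.log (t.card) = Real.log (coverNum A (1/(m:ℝ))).toReal := by
      rw [← htc, ENNReal.toReal_natCast]
    have h2 : intEntropy μ (fun ω i => ⌊(m:ℝ) * X ω i⌋) ≤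
        Real.log (coverNum A (1/(m:ℝ))).toReal + ε * ((n:ℝ) * Real.log m) + K' := by
      rw [hK'def]
      rw [mul_add] at hEB
      rw [hlogtc] at hEB
      linarith
    have hG : G (1/(m:ℝ)) = Real.log (coverNum A (1/(m:ℝ))).toReal / Real.log m := by
      rw [hGdef]
      simp only [one_div_one_div]
    calc u m ≤ (Real.log (coverNum A (1/(m:ℝ))).toReal + ε * ((n:ℝ) * Real.log m) + K')
          / Real.log m := by
          simp only [hudef]
          gcongr
      _ = Real.log (coverNum A (1/(m:ℝ))).toReal / Real.log m + ε * n + K' / Real.log m := by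
          field_simp
      _ = G (1/(m:ℝ)) + ε * n + K' / Real.log m := by rw [hG]
  have hrfl : upInfoDimVec μ X = Filter.limsup u Filter.atTop := rfl
  rw [hrfl]
  set D : ℝ := upMinkDim A with hDdef
  have hDG : upMinkDim A = Filter.limsup G (𝓝[>] (0:ℝ)) := rfl
  refine le_of_forall_pos_le_add fun η hη => ?_
  have hlimlt : Filter.limsup G (𝓝[>] (0:ℝ)) < D + η/2 := by
    rw [← hDG, ← hDdef]; linarith
  have hev1 : ∀ᶠ δ in 𝓝[>] (0:ℝ), G δ < D + η/2 := eventually_lt_of_limsup_lt hlimlt hGbd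
  have htend : Tendsto (fun m : ℕ => 1/(m:ℝ)) atTop (𝓝[>] (0:ℝ)) := by
    apply tendsto_nhdsWithin_of_tendsto_nhds_of_eventually_within _
      tendsto_one_div_atTop_nhds_zero_nat
    filter_upwards [eventually_ge_atTop 1] with m hm
    have : (0:ℝ) < m := by exact_mod_cast Nat.lt_of_lt_of_le Nat.zero_lt_one hm
    exact Set.mem_Ioi.2 (by positivity)
  have hev2 : ∀ᶠ m : ℕ in atTop, G (1/(m:ℝ)) < D + η/2 := htend.eventually hev1
  have htendlog : Tendsto (fun m : ℕ => Real.log m) atTop atTop :=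
    Real.tendsto_log_atTop.comp tendsto_natCast_atTop_atTop
  have htendK : Tendsto (fun m : ℕ => K' / Real.log m) atTop (𝓝 0) :=
    Tendsto.div_atTop tendsto_const_nhds htendlog
  have hev3 : ∀ᶠ m : ℕ in atTop, K' / Real.log m < η/2 :=
    htendK.eventually_lt_const (by positivity)
  have hev4 : ∀ᶠ m : ℕ in atTop, 2 ≤ m := eventually_ge_atTop 2
  have hev : ∀ᶠ m in atTop, u m ≤ D + ε * n + η := by
    filter_upwards [hev2, hev3, hev4] with m h2 h3 h4
    have := hseq m h4
    linarith
  have hcb : IsCoboundedUnder (· ≤ ·) atTop u := by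
    apply Filter.IsBoundedUnder.isCoboundedUnder_le
    refine ⟨0, ?_⟩
    rw [Filter.eventually_map]
    filter_upwards [hev4] with m hm
    exact hu0 m hm
  calc Filter.limsup u Filter.atTop ≤ D + ε * n + η := Filter.limsup_le_of_le hcb hev
    _ = D + ε * ↑n + η := rfl


end Stmt2Aux

theorem stmt2 {n : ℕ} {Ω : Type*} [MeasurableSpace Ω] (μ : Measure Ω) [IsProbabilityMeasure μ]
    (X : Ω → (Fin n → ℝ)) (hX : Measurable X) (ε : ℝ) (hε0 : 0 < ε) (hε1 : ε < 1)
    (hH : Summable fun z : Fin n → ℤ =>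
      Real.negMulLog ((μ {ω | (fun i => ⌊X ω i⌋) = z}).toReal)) :
    upInfoDimVec μ X - ε * n ≤ minkDimEps (Measure.map X μ) ε := by
  classical
  haveI : IsProbabilityMeasure (Measure.map X μ) := Measure.isProbabilityMeasure_map hX.aemeasurable
  have hν : ∀ A : Set (Fin n → ℝ), MeasurableSet A →
      ENNReal.ofReal (1-ε) ≤ Measure.map X μ A → (μ {ω | X ω ∉ A}).toReal ≤ ε := by
    intro A hAm hA
    have hmap : Measure.map X μ A = μ (X ⁻¹' A) := Measure.map_apply hX hAm
    have hc : μ (X ⁻¹' A)ᶜ = 1 - μ (X ⁻¹' A) := prob_compl_eq_one_sub (hX hAm)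
    have h1 : μ (X ⁻¹' A)ᶜ ≤ ENNReal.ofReal ε := by
      rw [hc]
      calc 1 - μ (X ⁻¹' A) ≤ 1 - ENNReal.ofReal (1-ε) :=
            tsub_le_tsub_left (hmap ▸ hA) 1
        _ = ENNReal.ofReal ε := by
            rw [← ENNReal.ofReal_one, ← ENNReal.ofReal_sub _ (by linarith : (0:ℝ) ≤ 1-ε)]
            norm_num
    have hset : {ω | X ω ∉ A} = (X ⁻¹' A)ᶜ := rfl
    rw [hset]
    calc (μ (X ⁻¹' A)ᶜ).toReal ≤ (ENNReal.ofReal ε).toReal :=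
          ENNReal.toReal_mono (by simp) h1
      _ = ε := ENNReal.toReal_ofReal hε0.le
  obtain ⟨k, hk⟩ : ∃ k : ℕ,
      ENNReal.ofReal (1-ε) ≤ Measure.map X μ (Metric.closedBall 0 k) := by
    have hdir : Directed (· ⊆ ·) (fun k : ℕ => Metric.closedBall (0 : Fin n → ℝ) k) := by
      intro i j
      refine ⟨max i j, Metric.closedBall_subset_closedBall ?_,
        Metric.closedBall_subset_closedBall ?_⟩ <;> exact_mod_cast le_max_iff.2 (by omega)
    have hun : (⋃ k : ℕ, Metric.closedBall (0 : Fin n → ℝ) k) = Set.univ := by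
      ext y
      simp only [Set.mem_iUnion, Metric.mem_closedBall, Set.mem_univ, iff_true]
      exact ⟨⌈dist y 0⌉₊, Nat.le_ceil _⟩
    have hsup := Directed.measure_iUnion (μ := Measure.map X μ) hdir
    rw [hun, measure_univ] at hsup
    have hlt : ENNReal.ofReal (1-ε) < 1 := by
      rw [← ENNReal.ofReal_one]
      exact ENNReal.ofReal_lt_ofReal_iff one_pos |>.2 (by linarith)
    rw [hsup] at hlt
    obtain ⟨k, hk⟩ := lt_iSup_iff.1 hlt
    exact ⟨k, hk.le⟩
  rw [minkDimEps]
  apply le_csInf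
  · refine ⟨upMinkDim (Metric.closedBall (0 : Fin n → ℝ) k), Metric.closedBall 0 k,
      ⟨0, Metric.mem_closedBall_self (by positivity)⟩, Metric.isBounded_closedBall,
      measurableSet_closedBall, hk, rfl⟩
  · rintro d ⟨A, hAne, hAbd, hAm, hA, rfl⟩
    have := Stmt2Aux.dim_bound hX hε0.le hH hAne hAbd (hν A hAm hA)
    linarith
end

section
/- Let X be a random vector in ℝⁿ with E‖X‖² < ∞, E[X] = 0 and covariance matrix E[XXᵀ] = Iₙ, let N be a standard Gaussian random vector in ℝ^k independent of X, let H ∈ ℝ^{k×n} and σ > 0. Then inf_f E‖X − f(HX + σN)‖² ≤ Tr( (Iₙ + σ^{-2} HᵀH)^{-1} ), where the infimum is over all Borel measurable f: ℝ^k → ℝⁿ; indeed the linear estimator f(y) = Hᵀ(HHᵀ + σ²I_k)^{-1} y achieves exactly this value. In particular, among all unit-covariance inputs the standard Gaussian input maximizes the minimum mean-square error for every fixed linear encoder. -/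
open MeasureTheory ProbabilityTheory Filter Real Matrix
open scoped NNReal ENNReal Topology

section GaussAux

lemma gaussPDF_eq : gaussianPDF 0 1
    = fun x => ENNReal.ofReal ((√(2 * π))⁻¹ * rexp (- x ^ 2 / 2)) := by
  funext x
  simp [gaussianPDF, gaussianPDFReal]

lemma gauss_wd : gaussianReal 0 1
    = volume.withDensity (fun x => (((√(2 * π))⁻¹ * rexp (- x ^ 2 / 2)).toNNReal : ℝ≥0∞)) := by
  rw [gaussianReal_of_var_ne_zero 0 one_ne_zero, gaussPDF_eq]
  rfl

lemma pdf_meas : Measurable (fun x : ℝ => ((√(2 * π))⁻¹ * rexp (- x ^ 2 / 2)).toNNReal) := by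
  fun_prop

lemma gauss_integral (g : ℝ → ℝ) :
    ∫ x, g x ∂(gaussianReal 0 1) = ∫ x, (√(2 * π))⁻¹ * rexp (- x ^ 2 / 2) * g x := by
  rw [gauss_wd, integral_withDensity_eq_integral_smul pdf_meas]
  refine integral_congr_ae (Filter.Eventually.of_forall fun x => ?_)
  simp only [NNReal.smul_def, smul_eq_mul]
  rw [Real.coe_toNNReal]
  positivity

lemma gauss_integrable (g : ℝ → ℝ) (hg :
    Integrable (fun x => (√(2 * π))⁻¹ * rexp (- x ^ 2 / 2) * g x)) :
    Integrable g (gaussianReal 0 1) := by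
  rw [gauss_wd, integrable_withDensity_iff_integrable_smul pdf_meas]
  refine hg.congr (Filter.Eventually.of_forall fun x => ?_)
  simp only [NNReal.smul_def, smul_eq_mul]
  rw [Real.coe_toNNReal]
  positivity

lemma integral_neg_cancel (f : ℝ → ℝ) : ∫ x, f (-x) = ∫ x, f x :=
  (Measure.measurePreserving_neg volume).integral_comp
    (Homeomorph.neg ℝ).measurableEmbedding f

lemma rpow_two_eq (x : ℝ) : x ^ (2:ℝ) = x ^ (2:ℕ) := by
  rw [show (2:ℝ) = ((2:ℕ):ℝ) by norm_num, Real.rpow_natCast]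

lemma gauss_m1 : ∫ x, x ∂(gaussianReal 0 1) = 0 := by
  rw [gauss_integral]
  have h := integral_neg_cancel (fun x => (√(2*π))⁻¹ * rexp (- x^2/2) * x)
  simp only [neg_sq, mul_neg, integral_neg] at h
  linarith

lemma key_m2 : ∫ x : ℝ, x ^ 2 * rexp (-(2⁻¹:ℝ) * x ^ 2) = Real.sqrt (2*π) := by
  have h1 := integral_comp_abs (f := fun x => x ^ 2 * rexp (-(2⁻¹:ℝ) * x ^ 2))
  simp only [sq_abs] at h1
  have h2 := integral_rpow_mul_exp_neg_mul_rpow (p:=2) (q:=2) (b:=2⁻¹)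
    two_pos (by norm_num) (by norm_num)
  simp only [rpow_two_eq] at h2
  rw [h1, h2]
  have hg : Real.Gamma ((2+1)/2) = √π / 2 := by
    rw [show ((2+1)/2 : ℝ) = 1/2 + 1 by norm_num, Real.Gamma_add_one (by norm_num),
      Real.Gamma_one_half_eq]
    ring
  rw [hg]
  rw [show ((2⁻¹:ℝ) ^ (-(2+1)/2 : ℝ)) = 2 * Real.sqrt 2 by
    rw [Real.inv_rpow (by norm_num : (0:ℝ) ≤ 2), ← Real.rpow_neg (by norm_num : (0:ℝ) ≤ 2),
      show (-(-(2+1)/2) : ℝ) = 1 + 1/2 by norm_num, Real.rpow_add two_pos, Real.rpow_one,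
      ← Real.sqrt_eq_rpow]]
  rw [Real.sqrt_mul (by norm_num) π]
  ring

lemma gauss_m2 : ∫ x, x * x ∂(gaussianReal 0 1) = 1 := by
  rw [gauss_integral]
  have : ∀ x : ℝ, (√(2 * π))⁻¹ * rexp (- x ^ 2 / 2) * (x * x)
      = (√(2 * π))⁻¹ * (x ^ 2 * rexp (-(2⁻¹:ℝ) * x ^ 2)) := by
    intro x
    rw [show -x ^ 2 / 2 = -(2⁻¹:ℝ) * x ^ 2 by ring]
    ring
  simp_rw [this, MeasureTheory.integral_const_mul, key_m2]
  rw [inv_mul_cancel₀]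
  positivity

lemma gauss_i1 : Integrable (fun x : ℝ => x) (gaussianReal 0 1) := by
  refine gauss_integrable _ ?_
  have h := (integrable_mul_exp_neg_mul_sq (b := 2⁻¹) (by norm_num)).const_mul (√(2 * π))⁻¹
  refine h.congr (Filter.Eventually.of_forall fun x => ?_)
  show _ = (√(2 * π))⁻¹ * rexp (-x ^ 2 / 2) * _
  rw [show -x ^ 2 / 2 = -(2⁻¹:ℝ) * x ^ 2 by ring]
  ring

lemma gauss_i2 : Integrable (fun x : ℝ => x * x) (gaussianReal 0 1) := by
  refine gauss_integrable _ ?_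
  have h := (integrable_rpow_mul_exp_neg_mul_sq (b := 2⁻¹) (by norm_num)
    (s := 2) (by norm_num)).const_mul (√(2 * π))⁻¹
  simp only [rpow_two_eq] at h
  refine h.congr (Filter.Eventually.of_forall fun x => ?_)
  show _ = (√(2 * π))⁻¹ * rexp (-x ^ 2 / 2) * _
  rw [show -x ^ 2 / 2 = -(2⁻¹:ℝ) * x ^ 2 by ring]
  ring

end GaussAux

section PiG
variable {k : ℕ}

noncomputable def piG (k : ℕ) : Measure (Fin k → ℝ) :=
  Measure.pi fun _ : Fin k => gaussianReal 0 1

instance : IsProbabilityMeasure (piG k) := by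
  unfold piG; infer_instance

lemma piG_prod_integral (f : Fin k → ℝ → ℝ) :
    ∫ y : Fin k → ℝ, ∏ i, f i (y i) ∂(piG k)
      = ∏ i, ∫ x, f i x ∂(gaussianReal 0 1) := by
  letI : MeasureSpace ℝ := ⟨gaussianReal 0 1⟩
  haveI : SigmaFinite (volume : Measure ℝ) := by
    change SigmaFinite (gaussianReal 0 1); infer_instance
  exact MeasureTheory.integral_fintype_prod_eq_prod (μ := fun _ => gaussianReal 0 1) f

lemma piG_prod_integrable (f : Fin k → ℝ → ℝ)
    (hf : ∀ i, Integrable (f i) (gaussianReal 0 1)) :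
    Integrable (fun y : Fin k → ℝ => ∏ i, f i (y i)) (piG k) := by
  letI : MeasureSpace ℝ := ⟨gaussianReal 0 1⟩
  haveI : SigmaFinite (volume : Measure ℝ) := by
    change SigmaFinite (gaussianReal 0 1); infer_instance
  exact MeasureTheory.Integrable.fintype_prod hf

lemma prod2_eq (j l : Fin k) (y : Fin k → ℝ) :
    y j * y l = ∏ i, ((if i = j then y i else 1) * (if i = l then y i else 1)) := by
  rw [Finset.prod_mul_distrib]
  simp [Finset.prod_ite_eq']

lemma int2_gauss (j l i : Fin k) :
    Integrable (fun t : ℝ => (if i = j then t else 1) * (if i = l then t else 1))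
      (gaussianReal 0 1) := by
  have conv : ∀ (g : ℝ → ℝ), (∀ t, (if i = j then t else 1) * (if i = l then t else 1) = g t) →
      Integrable g (gaussianReal 0 1) →
      Integrable (fun t : ℝ => (if i = j then t else 1) * (if i = l then t else 1))
        (gaussianReal 0 1) := by
    intro g hg hint
    exact hint.congr (Filter.Eventually.of_forall fun t => (hg t).symm)
  by_cases hj : i = j
  · by_cases hl : i = l
    · exact conv _ (fun t => by rw [if_pos hj, if_pos hl]) gauss_i2
    · exact conv _ (fun t => by rw [if_pos hj, if_neg hl, mul_one]) gauss_i1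
  · by_cases hl : i = l
    · exact conv _ (fun t => by rw [if_neg hj, if_pos hl, one_mul]) gauss_i1
    · exact conv _ (fun t => by rw [if_neg hj, if_neg hl, one_mul])
        (integrable_const (1:ℝ))

lemma piG_i2 (j l : Fin k) :
    Integrable (fun y : Fin k → ℝ => y j * y l) (piG k) := by
  have := piG_prod_integrable
    (fun i t => (if i = j then t else 1) * (if i = l then t else 1))
    (fun i => int2_gauss j l i)
  refine this.congr (Filter.Eventually.of_forall fun y => ?_)
  exact (prod2_eq j l y).symm

lemma piG_m2 (j l : Fin k) :
    ∫ y, y j * y l ∂(piG k) = if j = l then 1 else 0 := by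
  simp_rw [prod2_eq j l]
  rw [piG_prod_integral (fun i t => (if i = j then t else 1) * (if i = l then t else 1))]
  by_cases h : j = l
  · subst h
    rw [if_pos rfl]
    refine Finset.prod_eq_one fun i _ => ?_
    by_cases hj : i = j
    · simp only [hj, if_true, if_pos rfl]
      exact gauss_m2
    · simp [hj]
  · rw [if_neg h]
    refine Finset.prod_eq_zero (Finset.mem_univ j) ?_
    simp only [if_pos rfl, if_neg h, mul_one]
    exact gauss_m1

lemma prod1_eq (j : Fin k) (y : Fin k → ℝ) :
    y j = ∏ i, (if i = j then y i else 1) := by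
  simp [Finset.prod_ite_eq']

lemma piG_i1 (j : Fin k) :
    Integrable (fun y : Fin k → ℝ => y j) (piG k) := by
  have := piG_prod_integrable (fun i t => if i = j then t else 1)
    (fun i => by
      by_cases hj : i = j
      · subst hj; simpa using gauss_i1
      · simp only [if_neg hj]; exact integrable_const (1:ℝ))
  refine this.congr (Filter.Eventually.of_forall fun y => ?_)
  exact (prod1_eq j y).symm

lemma piG_m1 (j : Fin k) : ∫ y, y j ∂(piG k) = 0 := by
  simp_rw [prod1_eq j]
  rw [piG_prod_integral (fun i t => if i = j then t else 1)]
  refine Finset.prod_eq_zero (Finset.mem_univ j) ?_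
  simp only [if_pos rfl]
  exact gauss_m1

end PiG

section Tools

variable {Ω : Type*} [MeasurableSpace Ω] {μ : Measure Ω}

lemma l2mul {f g : Ω → ℝ} (hf : MemLp f 2 μ) (hg : MemLp g 2 μ) :
    Integrable (fun ω => f ω * g ω) μ := by
  refine Integrable.mono' ((hf.integrable_sq.add hg.integrable_sq).const_mul (2⁻¹:ℝ))
    (hf.aestronglyMeasurable.mul hg.aestronglyMeasurable)
    (Filter.Eventually.of_forall fun ω => ?_)
  rw [Real.norm_eq_abs, abs_mul]
  simp only [Pi.add_apply]
  nlinarith [sq_nonneg (|f ω| - |g ω|), sq_abs (f ω), sq_abs (g ω), abs_nonneg (f ω),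
    abs_nonneg (g ω)]

lemma cov_sum {a b : Type*} [Fintype a] [Fintype b]
    (c : a → ℝ) (d : b → ℝ) (U : Ω → a → ℝ) (V : Ω → b → ℝ) (R : a → b → ℝ)
    (hInt : ∀ j l, Integrable (fun ω => U ω j * V ω l) μ)
    (hval : ∀ j l, ∫ ω, U ω j * V ω l ∂μ = R j l) :
    ∫ ω, (∑ j, c j * U ω j) * (∑ l, d l * V ω l) ∂μ
      = ∑ j, ∑ l, c j * d l * R j l := by
  have e : ∀ ω, (∑ j, c j * U ω j) * (∑ l, d l * V ω l)
      = ∑ j, ∑ l, c j * d l * (U ω j * V ω l) := by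
    intro ω
    rw [Finset.sum_mul_sum]
    exact Finset.sum_congr rfl fun j _ => Finset.sum_congr rfl fun l _ =>
      (mul_mul_mul_comm _ _ _ _)
  simp_rw [e]
  rw [integral_finset_sum _ (fun j _ =>
    integrable_finset_sum _ (fun l _ => (hInt j l).const_mul _))]
  refine Finset.sum_congr rfl fun j _ => ?_
  rw [integral_finset_sum _ (fun l _ => (hInt j l).const_mul _)]
  refine Finset.sum_congr rfl fun l _ => ?_
  rw [MeasureTheory.integral_const_mul, hval]

end Tools

section MatrixKey
variable {n k : ℕ}

lemma matrix_key (H : Matrix (Fin k) (Fin n) ℝ) (σ : ℝ) (hσ : 0 < σ)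
    (M : Matrix (Fin k) (Fin k) ℝ) (hM : M = H * Hᵀ + (σ ^ 2) • 1) :
    (1 - Hᵀ * M⁻¹ * H) * (1 - Hᵀ * M⁻¹ * H)ᵀ
      + (σ ^ 2) • ((Hᵀ * M⁻¹) * (Hᵀ * M⁻¹)ᵀ)
      = (1 + (σ ^ 2)⁻¹ • (Hᵀ * H))⁻¹ := by
  have hs2 : (0:ℝ) < σ ^ 2 := by positivity
  have hPD : M.PosDef := by
    rw [hM]
    refine Matrix.PosDef.posSemidef_add ?_ ?_
    · have := Matrix.posSemidef_self_mul_conjTranspose H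
      rwa [Matrix.conjTranspose_eq_transpose_of_trivial] at this
    · rw [Matrix.smul_one_eq_diagonal]
      exact Matrix.PosDef.diagonal fun _ => hs2
  have hdet : IsUnit M.det := (Matrix.isUnit_iff_isUnit_det M).mp hPD.isUnit
  have hMi : M * M⁻¹ = 1 := Matrix.mul_nonsing_inv _ hdet
  have hMT : Mᵀ = M := by
    rw [hM]
    simp [Matrix.transpose_add, Matrix.transpose_mul, Matrix.transpose_smul]
  have hMiT : M⁻¹ᵀ = M⁻¹ := by rw [Matrix.transpose_nonsing_inv, hMT]
  have hAT : (Hᵀ * M⁻¹)ᵀ = M⁻¹ * H := by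
    rw [Matrix.transpose_mul, hMiT, Matrix.transpose_transpose]
  have hKT : (1 - Hᵀ * M⁻¹ * H)ᵀ = 1 - Hᵀ * M⁻¹ * H := by
    rw [Matrix.transpose_sub, Matrix.transpose_one, Matrix.transpose_mul, hAT,
      Matrix.mul_assoc]
  have key : (Hᵀ * M⁻¹ * H) * (Hᵀ * M⁻¹ * H)
      + (σ ^ 2) • (Hᵀ * M⁻¹ * (M⁻¹ * H)) = Hᵀ * M⁻¹ * H := by
    have expand : (Hᵀ * M⁻¹ * H) * (Hᵀ * M⁻¹ * H)
        + (σ ^ 2) • (Hᵀ * M⁻¹ * (M⁻¹ * H))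
        = Hᵀ * M⁻¹ * (M * (M⁻¹ * H)) := by
      rw [hM, Matrix.add_mul, Matrix.mul_add]
      rw [Matrix.smul_mul, Matrix.one_mul, Matrix.mul_smul]
      congr 1
      simp only [Matrix.mul_assoc]
    rw [expand, ← Matrix.mul_assoc M, hMi, Matrix.one_mul]
  have key2 : (Hᵀ * H) * (Hᵀ * M⁻¹ * H) = Hᵀ * H - (σ ^ 2) • (Hᵀ * M⁻¹ * H) := by
    have e1 : (Hᵀ * H) * (Hᵀ * M⁻¹ * H) = Hᵀ * ((H * Hᵀ) * (M⁻¹ * H)) := by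
      simp only [Matrix.mul_assoc]
    have e2 : H * Hᵀ = M - (σ ^ 2) • 1 := by rw [hM]; abel
    rw [e1, e2, Matrix.sub_mul, Matrix.mul_sub, ← Matrix.mul_assoc M, hMi, Matrix.one_mul,
      Matrix.smul_mul, Matrix.one_mul, Matrix.mul_smul, ← Matrix.mul_assoc]
  have step2 : (1 + (σ ^ 2)⁻¹ • (Hᵀ * H)) * (1 - Hᵀ * M⁻¹ * H) = 1 := by
    rw [Matrix.add_mul, Matrix.one_mul, Matrix.smul_mul, Matrix.mul_sub, Matrix.mul_one,
      key2]
    rw [sub_sub_cancel, smul_smul, inv_mul_cancel₀ (ne_of_gt hs2), one_smul]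
    abel
  have step1 : (1 - Hᵀ * M⁻¹ * H) * (1 - Hᵀ * M⁻¹ * H)ᵀ
      + (σ ^ 2) • ((Hᵀ * M⁻¹) * (Hᵀ * M⁻¹)ᵀ) = 1 - Hᵀ * M⁻¹ * H := by
    rw [hKT, hAT]
    have exp2 : (1 - Hᵀ * M⁻¹ * H) * (1 - Hᵀ * M⁻¹ * H)
        = 1 - Hᵀ * M⁻¹ * H - Hᵀ * M⁻¹ * H + (Hᵀ * M⁻¹ * H) * (Hᵀ * M⁻¹ * H) := by
      noncomm_ring
    rw [exp2, add_assoc, key]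
    abel
  rw [step1]
  exact (Matrix.inv_eq_right_inv step2).symm

end MatrixKey

/-- Minimum mean-square error of estimating the `ℝⁿ`-valued random vector `U` from the
observation `V`: `mmse(U | V) = inf_f E‖U − f(V)‖²`, the infimum over all Borel measurable
estimators `f`, with `‖·‖` the Euclidean norm. -/
noncomputable def mmse {Ω : Type*} [MeasurableSpace Ω] (μ : Measure Ω) {n : ℕ}
    {β : Type*} [MeasurableSpace β] (U : Ω → (Fin n → ℝ)) (V : Ω → β) : ℝ :=
  ⨅ f : {f : β → (Fin n → ℝ) // Measurable f},
    ∫ ω, ∑ i, (U ω i - (f : β → (Fin n → ℝ)) (V ω) i) ^ 2 ∂μ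

/-- For a zero-mean, identity-covariance random vector `X` in `ℝⁿ` with
`E‖X‖² < ∞`, a standard Gaussian `N` in `ℝᵏ` independent of `X`, `H ∈ ℝ^{k×n}` and `σ > 0`:
the linear estimator `f₀(y) = Hᵀ(HHᵀ + σ²I)⁻¹ y` attains mean-square error exactly
`Tr((Iₙ + σ⁻²HᵀH)⁻¹)`, and hence `mmse(X | HX + σN) ≤ Tr((Iₙ + σ⁻²HᵀH)⁻¹)`. -/
theorem stmt7 {n k : ℕ} {Ω : Type*} [MeasurableSpace Ω] (μ : Measure Ω) [IsProbabilityMeasure μ]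
    (X : Ω → (Fin n → ℝ)) (N : Ω → (Fin k → ℝ)) (hX : Measurable X) (hN : Measurable N)
    (hint : Integrable (fun ω => ∑ i, (X ω i) ^ 2) μ)
    (hmean : ∀ i, ∫ ω, X ω i ∂μ = 0)
    (hcov : ∀ i j, ∫ ω, X ω i * X ω j ∂μ = if i = j then 1 else 0)
    -- `N` is standard Gaussian in `ℝᵏ` and independent of `X`
    (hlaw : Measure.map (fun ω => (X ω, N ω)) μ
      = (Measure.map X μ).prod (Measure.pi fun _ : Fin k => gaussianReal 0 1))
    (H : Matrix (Fin k) (Fin n) ℝ) (σ : ℝ) (hσ : 0 < σ) :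
    (∫ ω, ∑ i,
        (X ω i - (Hᵀ * (H * Hᵀ + (σ ^ 2) • (1 : Matrix (Fin k) (Fin k) ℝ))⁻¹).mulVec
          (H.mulVec (X ω) + σ • N ω) i) ^ 2 ∂μ
      = Matrix.trace ((1 + (σ ^ 2)⁻¹ • (Hᵀ * H))⁻¹)) ∧
    mmse μ X (fun ω => H.mulVec (X ω) + σ • N ω)
      ≤ Matrix.trace ((1 + (σ ^ 2)⁻¹ • (Hᵀ * H))⁻¹) := by
  -- notation
  set M : Matrix (Fin k) (Fin k) ℝ := H * Hᵀ + (σ ^ 2) • 1 with hMdef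
  set A : Matrix (Fin n) (Fin k) ℝ := Hᵀ * M⁻¹ with hAdef
  set B : Matrix (Fin n) (Fin n) ℝ := 1 - A * H with hBdef
  have hpair : Measurable fun ω => (X ω, N ω) := hX.prodMk hN
  haveI : IsProbabilityMeasure (Measure.map X μ) :=
    Measure.isProbabilityMeasure_map hX.aemeasurable
  have hXi : ∀ j, Measurable fun ω => X ω j := fun j => (measurable_pi_apply j).comp hX
  have hNi : ∀ j, Measurable fun ω => N ω j := fun j => (measurable_pi_apply j).comp hN
  -- law of N
  have hNmap : Measure.map N μ = piG k := by
    have h1 : N = Prod.snd ∘ (fun ω => (X ω, N ω)) := rfl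
    rw [h1, ← Measure.map_map measurable_snd hpair, hlaw]
    change ((Measure.map X μ).prod (piG k)).snd = piG k
    exact Measure.snd_prod
  -- L² bounds for X
  have hXsq : ∀ j, Integrable (fun ω => X ω j ^ 2) μ := by
    intro j
    refine hint.mono' (((hXi j).pow_const 2).aestronglyMeasurable)
      (Filter.Eventually.of_forall fun ω => ?_)
    rw [Real.norm_eq_abs, abs_of_nonneg (sq_nonneg _)]
    exact Finset.single_le_sum (fun i _ => sq_nonneg (X ω i)) (Finset.mem_univ j)
  have hX2 : ∀ j, MemLp (fun ω => X ω j) 2 μ := fun j =>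
    (memLp_two_iff_integrable_sq (hXi j).aestronglyMeasurable).mpr (hXsq j)
  -- L² bounds for N
  have hNmul : ∀ j l, Integrable (fun ω => N ω j * N ω l) μ := by
    intro j l
    have h1 : Integrable (fun y : Fin k → ℝ => y j * y l) (Measure.map N μ) := by
      rw [hNmap]; exact piG_i2 j l
    exact (integrable_map_measure
      (((measurable_pi_apply j).mul (measurable_pi_apply l)).aestronglyMeasurable)
      hN.aemeasurable).mp h1
  have hN2 : ∀ j, MemLp (fun ω => N ω j) 2 μ := by
    intro j
    refine (memLp_two_iff_integrable_sq (hNi j).aestronglyMeasurable).mpr ?_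
    refine (hNmul j j).congr (Filter.Eventually.of_forall fun ω => ?_)
    simp [pow_two]
  have hNcov : ∀ j l, ∫ ω, N ω j * N ω l ∂μ = if j = l then 1 else 0 := by
    intro j l
    have h1 : ∫ y, y j * y l ∂(Measure.map N μ) = ∫ ω, N ω j * N ω l ∂μ :=
      integral_map hN.aemeasurable
        (((measurable_pi_apply j).mul (measurable_pi_apply l)).aestronglyMeasurable)
    rw [← h1, hNmap]
    exact piG_m2 j l
  -- cross terms
  have hXNmeas : ∀ (j : Fin n) (l : Fin k),
      Measurable (fun p : (Fin n → ℝ) × (Fin k → ℝ) => p.1 j * p.2 l) := fun j l =>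
    ((measurable_pi_apply j).comp measurable_fst).mul
      ((measurable_pi_apply l).comp measurable_snd)
  have hXNint : ∀ j l, Integrable (fun ω => X ω j * N ω l) μ := by
    intro j l
    have h1 : Integrable (fun p : (Fin n → ℝ) × (Fin k → ℝ) => p.1 j * p.2 l)
        (Measure.map (fun ω => (X ω, N ω)) μ) := by
      rw [hlaw]
      have hf1 : Integrable (fun x : Fin n → ℝ => x j) (Measure.map X μ) :=
        (integrable_map_measure (measurable_pi_apply j).aestronglyMeasurable
          hX.aemeasurable).mpr ((hX2 j).integrable one_le_two)
      exact Integrable.mul_prod (f := fun x : Fin n → ℝ => x j)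
        (g := fun y : Fin k → ℝ => y l) hf1 (piG_i1 l)
    exact (integrable_map_measure ((hXNmeas j l).aestronglyMeasurable)
      hpair.aemeasurable).mp h1
  have hXNzero : ∀ j l, ∫ ω, X ω j * N ω l ∂μ = 0 := by
    intro j l
    have h1 : ∫ p, p.1 j * p.2 l ∂(Measure.map (fun ω => (X ω, N ω)) μ)
        = ∫ ω, X ω j * N ω l ∂μ :=
      integral_map hpair.aemeasurable ((hXNmeas j l).aestronglyMeasurable)
    rw [← h1, hlaw,
      integral_prod_mul (fun x : Fin n → ℝ => x j) (fun y : Fin k → ℝ => y l)]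
    have hx0 : ∫ x : Fin n → ℝ, x j ∂(Measure.map X μ) = 0 := by
      rw [integral_map hX.aemeasurable (measurable_pi_apply j).aestronglyMeasurable]
      exact hmean j
    rw [hx0, zero_mul]
  have hXXint : ∀ j l, Integrable (fun ω => X ω j * X ω l) μ := fun j l =>
    l2mul (hX2 j) (hX2 l)
  -- the error coordinates
  have hpt : ∀ ω (i : Fin n),
      X ω i - A.mulVec (H.mulVec (X ω) + σ • N ω) i
        = (∑ j, B i j * X ω j) - σ * (∑ j, A i j * N ω j) := by
    intro ω i
    have h1 : (∑ j, B i j * X ω j) = (B.mulVec (X ω)) i := by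
      simp [Matrix.mulVec, dotProduct]
    have h2 : (∑ j, A i j * N ω j) = (A.mulVec (N ω)) i := by
      simp [Matrix.mulVec, dotProduct]
    rw [h1, h2, Matrix.mulVec_add, Matrix.mulVec_smul, Matrix.mulVec_mulVec, hBdef,
      Matrix.sub_mulVec, Matrix.one_mulVec]
    simp only [Pi.add_apply, Pi.smul_apply, smul_eq_mul, Pi.sub_apply]
    ring
  -- L² of the linear combinations
  have hF2 : ∀ i : Fin n, MemLp (fun ω => ∑ j, B i j * X ω j) 2 μ := fun i =>
    memLp_finset_sum _ (fun j _ => (hX2 j).const_mul (B i j))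
  have hG2 : ∀ i : Fin n, MemLp (fun ω => ∑ j, A i j * N ω j) 2 μ := fun i =>
    memLp_finset_sum _ (fun j _ => (hN2 j).const_mul (A i j))
  -- per-coordinate second moments
  have hFF : ∀ i : Fin n, ∫ ω, (∑ j, B i j * X ω j) * (∑ l, B i l * X ω l) ∂μ
      = (B * Bᵀ) i i := by
    intro i
    rw [cov_sum (B i) (B i) X X _ hXXint hcov]
    rw [Matrix.mul_apply]
    refine Finset.sum_congr rfl fun j _ => ?_
    have : ∑ l, B i j * B i l * (if j = l then 1 else 0) = B i j * B i j := by
      simp [mul_ite, Finset.sum_ite_eq]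
    rw [this, Matrix.transpose_apply]
  have hGG : ∀ i : Fin n, ∫ ω, (∑ j, A i j * N ω j) * (∑ l, A i l * N ω l) ∂μ
      = (A * Aᵀ) i i := by
    intro i
    rw [cov_sum (A i) (A i) N N _ hNmul hNcov]
    rw [Matrix.mul_apply]
    refine Finset.sum_congr rfl fun j _ => ?_
    have : ∑ l, A i j * A i l * (if j = l then 1 else 0) = A i j * A i j := by
      simp [mul_ite, Finset.sum_ite_eq]
    rw [this, Matrix.transpose_apply]
  have hFG : ∀ i : Fin n, ∫ ω, (∑ j, B i j * X ω j) * (∑ l, A i l * N ω l) ∂μ = 0 := by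
    intro i
    rw [cov_sum (B i) (A i) X N (fun _ _ => 0) hXNint hXNzero]
    simp
  -- the per-coordinate mean-square error
  have hper : ∀ i : Fin n,
      ∫ ω, ((∑ j, B i j * X ω j) - σ * (∑ j, A i j * N ω j)) ^ 2 ∂μ
        = (B * Bᵀ) i i + σ ^ 2 * (A * Aᵀ) i i := by
    intro i
    have e : ∀ ω, ((∑ j, B i j * X ω j) - σ * (∑ j, A i j * N ω j)) ^ 2
        = (∑ j, B i j * X ω j) * (∑ l, B i l * X ω l)
          - (2 * σ) * ((∑ j, B i j * X ω j) * (∑ l, A i l * N ω l))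
          + (σ ^ 2) * ((∑ j, A i j * N ω j) * (∑ l, A i l * N ω l)) := by
      intro ω
      ring
    simp_rw [e]
    have IFF := l2mul (hF2 i) (hF2 i)
    have IFG := l2mul (hF2 i) (hG2 i)
    have IGG := l2mul (hG2 i) (hG2 i)
    have h2 : Integrable (fun ω => (∑ j, B i j * X ω j) * (∑ l, B i l * X ω l)
        - (2 * σ) * ((∑ j, B i j * X ω j) * (∑ l, A i l * N ω l))) μ :=
      IFF.sub (IFG.const_mul (2 * σ))
    have h3 : Integrable (fun ω =>
        (σ ^ 2) * ((∑ j, A i j * N ω j) * (∑ l, A i l * N ω l))) μ :=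
      IGG.const_mul (σ ^ 2)
    have h4 : Integrable (fun ω =>
        (2 * σ) * ((∑ j, B i j * X ω j) * (∑ l, A i l * N ω l))) μ :=
      IFG.const_mul (2 * σ)
    rw [integral_add h2 h3, integral_sub IFF h4, MeasureTheory.integral_const_mul,
      MeasureTheory.integral_const_mul, hFF, hGG, hFG]
    ring
  -- main equality
  have main : ∫ ω, ∑ i,
      (X ω i - A.mulVec (H.mulVec (X ω) + σ • N ω) i) ^ 2 ∂μ
      = Matrix.trace ((1 + (σ ^ 2)⁻¹ • (Hᵀ * H))⁻¹) := by
    have e1 : ∀ ω, ∑ i, (X ω i - A.mulVec (H.mulVec (X ω) + σ • N ω) i) ^ 2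
        = ∑ i, ((∑ j, B i j * X ω j) - σ * (∑ j, A i j * N ω j)) ^ 2 := by
      intro ω
      exact Finset.sum_congr rfl fun i _ => by rw [hpt ω i]
    simp_rw [e1]
    rw [integral_finset_sum _ (fun i _ => by
      have h2 : MemLp (fun ω => (∑ j, B i j * X ω j) - σ * (∑ j, A i j * N ω j)) 2 μ :=
        (hF2 i).sub ((hG2 i).const_mul σ)
      exact h2.integrable_sq)]
    have e2 : ∑ i, ((B * Bᵀ) i i + σ ^ 2 * (A * Aᵀ) i i)
        = Matrix.trace (B * Bᵀ + (σ ^ 2) • (A * Aᵀ)) := by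
      rw [Matrix.trace]
      refine (Finset.sum_congr rfl fun i _ => ?_).symm
      simp [Matrix.diag, Matrix.add_apply, Matrix.smul_apply, smul_eq_mul]
    calc ∑ i, ∫ ω, ((∑ j, B i j * X ω j) - σ * (∑ j, A i j * N ω j)) ^ 2 ∂μ
        = ∑ i, ((B * Bᵀ) i i + σ ^ 2 * (A * Aᵀ) i i) :=
          Finset.sum_congr rfl fun i _ => hper i
      _ = Matrix.trace (B * Bᵀ + (σ ^ 2) • (A * Aᵀ)) := e2
      _ = Matrix.trace ((1 + (σ ^ 2)⁻¹ • (Hᵀ * H))⁻¹) := by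
          rw [hBdef, hAdef]
          rw [matrix_key H σ hσ M hMdef]
  refine ⟨main, ?_⟩
  -- the measurable linear estimator
  have hf0 : Measurable (fun y : Fin k → ℝ => A.mulVec y) := by
    refine measurable_pi_lambda _ fun i => ?_
    simp only [Matrix.mulVec, dotProduct]
    exact Finset.measurable_sum _ fun j _ => (measurable_pi_apply j).const_mul _
  have hBdd : BddBelow (Set.range fun f : {f : (Fin k → ℝ) → (Fin n → ℝ) // Measurable f} =>
      ∫ ω, ∑ i, (X ω i - (f : (Fin k → ℝ) → (Fin n → ℝ)) (H.mulVec (X ω) + σ • N ω) i) ^ 2 ∂μ) := by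
    refine ⟨0, ?_⟩
    rintro x ⟨f, rfl⟩
    exact integral_nonneg fun ω => Finset.sum_nonneg fun i _ => sq_nonneg _
  have hle := ciInf_le hBdd (⟨fun y => A.mulVec y, hf0⟩ :
    {f : (Fin k → ℝ) → (Fin n → ℝ) // Measurable f})
  rw [mmse]
  exact le_trans hle (le_of_eq main)
end

section
/- Let k ≥ n ≥ 1 be integers and σ > 0. Then inf{ Tr( (Iₙ + σ^{-2} HᵀH)^{-1} ) : H ∈ ℝ^{k×n}, Tr(HᵀH) ≤ k } = n / (1 + (k/n)σ^{-2}), and the infimum is attained by the matrix H whose top n×n block is √(k/n)·Iₙ and whose remaining rows are zero. -/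
open MeasureTheory Filter Real Matrix
open scoped NNReal ENNReal Topology

/-- The `k×n` matrix whose top `n×n` block is `√(k/n)·Iₙ` and whose remaining rows vanish. -/
noncomputable def optMatGe (k n : ℕ) : Matrix (Fin k) (Fin n) ℝ :=
  Matrix.of fun i j => if (i : ℕ) = (j : ℕ) then Real.sqrt ((k : ℝ) / n) else 0

lemma stmt9_aux_diag {n : ℕ} (M : Matrix (Fin n) (Fin n) ℝ) (hM : M.PosSemidef) (c : ℝ)
    (hc : 0 ≤ c) :
    ∃ d : Fin n → ℝ, (∀ i, 1 ≤ d i) ∧ (∑ i, d i = (n : ℝ) + c * M.trace) ∧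
      ((1 + c • M)⁻¹).trace = ∑ i, (d i)⁻¹ := by
  have hH : M.IsHermitian := hM.1
  set U : Matrix (Fin n) (Fin n) ℝ := (hH.eigenvectorUnitary : Matrix (Fin n) (Fin n) ℝ) with hU
  have hU1 : U * star U = 1 := (Matrix.mem_unitaryGroup_iff).mp hH.eigenvectorUnitary.2
  have hU2 : star U * U = 1 := (Matrix.mem_unitaryGroup_iff').mp hH.eigenvectorUnitary.2
  set lam : Fin n → ℝ := hH.eigenvalues with hlam
  have hofReal : (RCLike.ofReal ∘ lam) = lam := by
    funext i; simp
  have hspec : M = U * Matrix.diagonal lam * star U := by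
    have := hH.spectral_theorem
    rwa [hofReal] at this
  have hsand : ∀ X Y : Matrix (Fin n) (Fin n) ℝ,
      (U * X * star U) * (U * Y * star U) = U * (X * Y) * star U := by
    intro X Y
    simp only [Matrix.mul_assoc]
    rw [← Matrix.mul_assoc (star U) U, hU2, Matrix.one_mul]
  have htr : ∀ X : Matrix (Fin n) (Fin n) ℝ, (U * X * star U).trace = X.trace := by
    intro X
    rw [Matrix.trace_mul_cycle, hU2, Matrix.one_mul]
  refine ⟨fun i => 1 + c * lam i, ?_, ?_, ?_⟩
  · intro i
    have h2 : 0 ≤ lam i := hM.eigenvalues_nonneg i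
    show (1 : ℝ) ≤ 1 + c * lam i
    nlinarith [mul_nonneg hc h2]
  · have hM_tr : M.trace = ∑ i, lam i := by
      rw [hspec, htr, Matrix.trace_diagonal]
    rw [hM_tr, Finset.sum_add_distrib, ← Finset.mul_sum]
    simp
  · have hd0 : ∀ i, (1 : ℝ) + c * lam i ≠ 0 := by
      intro i
      have h2 : 0 ≤ lam i := hM.eigenvalues_nonneg i
      nlinarith [mul_nonneg hc h2]
    have hB : (1 : Matrix (Fin n) (Fin n) ℝ) + c • M
        = U * Matrix.diagonal (fun i => 1 + c * lam i) * star U := by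
      have h1 : Matrix.diagonal (fun i => (1 : ℝ) + c * lam i)
          = 1 + c • Matrix.diagonal lam := by
        ext i j
        rcases eq_or_ne i j with rfl | h
        · simp
        · simp [Matrix.diagonal_apply_ne _ h, Matrix.one_apply_ne h]
      rw [h1, Matrix.mul_add, Matrix.add_mul, Matrix.mul_one, hU1, Matrix.mul_smul,
        Matrix.smul_mul, hspec]
    have hinv : (1 + c • M)⁻¹
        = U * Matrix.diagonal (fun i => ((1 : ℝ) + c * lam i)⁻¹) * star U := by
      apply Matrix.inv_eq_right_inv
      rw [hB, hsand, Matrix.diagonal_mul_diagonal]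
      have : (fun i => ((1 : ℝ) + c * lam i) * ((1 : ℝ) + c * lam i)⁻¹) = fun _ => (1 : ℝ) := by
        funext i; exact mul_inv_cancel₀ (hd0 i)
      rw [this, Matrix.diagonal_one, Matrix.mul_one, hU1]
    rw [hinv, htr, Matrix.trace_diagonal]

lemma stmt9_key_cs {n : ℕ} (d : Fin n → ℝ) (hd : ∀ i, 1 ≤ d i) :
    ((n : ℝ)) ^ 2 ≤ (∑ i, d i) * (∑ i, (d i)⁻¹) := by
  have h := Finset.sum_mul_sq_le_sq_mul_sq Finset.univ
    (fun i => Real.sqrt (d i)) (fun i => Real.sqrt ((d i)⁻¹))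
  have h1 : ∀ i : Fin n, Real.sqrt (d i) * Real.sqrt ((d i)⁻¹) = 1 := by
    intro i
    rw [← Real.sqrt_mul (by linarith [hd i]), mul_inv_cancel₀ (by linarith [hd i]), Real.sqrt_one]
  simp only [h1] at h
  have h2 : ∀ i : Fin n, Real.sqrt (d i) ^ 2 = d i := fun i => Real.sq_sqrt (by linarith [hd i])
  have h3 : ∀ i : Fin n, Real.sqrt ((d i)⁻¹) ^ 2 = (d i)⁻¹ := fun i =>
    Real.sq_sqrt (inv_nonneg.2 (by linarith [hd i]))
  simp only [h2, h3, Finset.sum_const, Finset.card_univ, Fintype.card_fin, nsmul_eq_mul,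
    mul_one] at h
  exact_mod_cast h

lemma stmt9_opt_mul (k n : ℕ) (hn : 1 ≤ n) (hkn : n ≤ k) :
    (optMatGe k n)ᵀ * optMatGe k n = ((k : ℝ) / n) • (1 : Matrix (Fin n) (Fin n) ℝ) := by
  have hkn0 : (0 : ℝ) ≤ (k : ℝ) / n := by positivity
  ext j₁ j₂
  simp only [Matrix.mul_apply, Matrix.transpose_apply, optMatGe, Matrix.of_apply,
    Matrix.smul_apply, Matrix.one_apply, smul_eq_mul]
  rw [Finset.sum_eq_single (Fin.castLE hkn j₁)]
  · simp only [Fin.coe_castLE]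
    rcases eq_or_ne j₁ j₂ with rfl | h
    · norm_num
      rw [div_mul_div_comm, Real.mul_self_sqrt (Nat.cast_nonneg k),
        Real.mul_self_sqrt (Nat.cast_nonneg n)]
    · have : (j₁ : ℕ) ≠ (j₂ : ℕ) := fun hc => h (Fin.ext hc)
      simp [this, h]
  · intro i _ hi
    have : (i : ℕ) ≠ (j₁ : ℕ) := by
      intro hc
      exact hi (Fin.ext (by simp [hc]))
    simp [this]
  · intro h
    exact absurd (Finset.mem_univ _) h

/-- For integers `k ≥ n ≥ 1` and `σ > 0`,
`inf{ Tr((Iₙ + σ⁻²HᵀH)⁻¹) : H ∈ ℝ^{k×n}, Tr(HᵀH) ≤ k } = n/(1 + (k/n)σ⁻²)`, and the infimum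
is attained by the matrix whose top `n×n` block is `√(k/n)·Iₙ` and whose other rows vanish. -/
theorem stmt9 (k n : ℕ) (hn : 1 ≤ n) (hkn : n ≤ k) (σ : ℝ) (hσ : 0 < σ) :
    sInf {v : ℝ | ∃ H : Matrix (Fin k) (Fin n) ℝ,
        Matrix.trace (Hᵀ * H) ≤ (k : ℝ) ∧
        v = Matrix.trace ((1 + (σ ^ 2)⁻¹ • (Hᵀ * H))⁻¹)}
      = (n : ℝ) / (1 + ((k : ℝ) / n) * (σ ^ 2)⁻¹) ∧
    Matrix.trace ((optMatGe k n)ᵀ * optMatGe k n) ≤ (k : ℝ) ∧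
    Matrix.trace ((1 + (σ ^ 2)⁻¹ • ((optMatGe k n)ᵀ * optMatGe k n))⁻¹)
      = (n : ℝ) / (1 + ((k : ℝ) / n) * (σ ^ 2)⁻¹) := by
  set c : ℝ := (σ ^ 2)⁻¹ with hc_def
  have hc : 0 < c := by positivity
  have hn0 : (0 : ℝ) < n := by exact_mod_cast hn
  have hk0 : (0 : ℝ) < k := by
    have : (1 : ℕ) ≤ k := le_trans hn hkn
    exact_mod_cast this
  set V : ℝ := (n : ℝ) / (1 + ((k : ℝ) / n) * c) with hV_def
  have haden : (0 : ℝ) < 1 + ((k : ℝ) / n) * c := by positivity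
  have hden : (0 : ℝ) < (n : ℝ) + c * k := by positivity
  have hVeq : V = (n : ℝ) ^ 2 / ((n : ℝ) + c * k) := by
    rw [hV_def]
    field_simp
  -- the common trace bound
  have lower : ∀ H : Matrix (Fin k) (Fin n) ℝ, Matrix.trace (Hᵀ * H) ≤ (k : ℝ) →
      V ≤ Matrix.trace ((1 + c • (Hᵀ * H))⁻¹) := by
    intro H hH
    have hPSD : (Hᵀ * H).PosSemidef := by
      have := Matrix.posSemidef_conjTranspose_mul_self H
      rwa [Matrix.conjTranspose_eq_transpose_of_trivial] at this
    obtain ⟨d, hd1, hdsum, hdtr⟩ := stmt9_aux_diag _ hPSD c hc.le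
    rw [hdtr]
    have hCS := stmt9_key_cs d hd1
    have hsum_le : ∑ i, d i ≤ (n : ℝ) + c * k := by
      rw [hdsum]
      have := mul_le_mul_of_nonneg_left hH hc.le
      linarith
    have hinv_nonneg : (0 : ℝ) ≤ ∑ i, (d i)⁻¹ :=
      Finset.sum_nonneg fun i _ => inv_nonneg.2 (by linarith [hd1 i])
    rw [hVeq, div_le_iff₀ hden]
    nlinarith [mul_le_mul_of_nonneg_right hsum_le hinv_nonneg]
  -- the optimal matrix
  have hopt := stmt9_opt_mul k n hn hkn
  have htr_opt : Matrix.trace ((optMatGe k n)ᵀ * optMatGe k n) ≤ (k : ℝ) := by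
    rw [hopt, Matrix.trace_smul, Matrix.trace_one]
    simp only [smul_eq_mul, Fintype.card_fin]
    rw [div_mul_cancel₀ _ (ne_of_gt hn0)]
  have hval_opt : Matrix.trace ((1 + c • ((optMatGe k n)ᵀ * optMatGe k n))⁻¹) = V := by
    rw [hopt]
    have hA : (1 : Matrix (Fin n) (Fin n) ℝ) + c • (((k : ℝ) / n) • 1)
        = (1 + ((k : ℝ) / n) * c) • 1 := by
      rw [smul_smul, add_smul, one_smul, mul_comm]
    rw [hA]
    have hainv : ((1 + ((k : ℝ) / n) * c) • (1 : Matrix (Fin n) (Fin n) ℝ))⁻¹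
        = (1 + ((k : ℝ) / n) * c)⁻¹ • 1 := by
      apply Matrix.inv_eq_right_inv
      rw [smul_mul_smul_comm, Matrix.one_mul, mul_inv_cancel₀ (ne_of_gt haden), one_smul]
    rw [hainv, Matrix.trace_smul, Matrix.trace_one]
    simp only [smul_eq_mul, Fintype.card_fin]
    rw [hV_def, div_eq_mul_inv, mul_comm]
    rw [div_eq_mul_inv]
  have memS : V ∈ {v : ℝ | ∃ H : Matrix (Fin k) (Fin n) ℝ,
      Matrix.trace (Hᵀ * H) ≤ (k : ℝ) ∧
      v = Matrix.trace ((1 + (σ ^ 2)⁻¹ • (Hᵀ * H))⁻¹)} :=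
    ⟨optMatGe k n, htr_opt, hval_opt.symm⟩
  refine ⟨?_, htr_opt, hval_opt⟩
  apply le_antisymm
  · exact csInf_le ⟨V, fun v hv => by
      obtain ⟨H, hH, rfl⟩ := hv
      exact lower H hH⟩ memS
  · exact le_csInf ⟨V, memS⟩ fun v hv => by
      obtain ⟨H, hH, rfl⟩ := hv
      exact lower H hH
end

section
/- Let k < n be positive integers and σ > 0. Then inf{ Tr( (Iₙ + σ^{-2} HᵀH)^{-1} ) : H ∈ ℝ^{k×n}, Tr(HᵀH) ≤ k } = n − k/(1 + σ²), and the infimum is attained by H = [I_k 0] (the matrix that keeps the first k coordinates). In particular, for every positive semidefinite n×n matrix M with rank(M) ≤ k and Tr(M) ≤ k one has Tr( (Iₙ + σ^{-2} M)^{-1} ) ≥ n − k/(1 + σ²). -/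
open MeasureTheory Filter Real Matrix
open scoped NNReal ENNReal Topology

/-- The `k×n` matrix `[I_k 0]` keeping the first `k` coordinates. -/
noncomputable def optMatLt (k n : ℕ) : Matrix (Fin k) (Fin n) ℝ :=
  Matrix.of fun i j => if (i : ℕ) = (j : ℕ) then 1 else 0

section Aux

lemma stmt10_trace_conj {n : ℕ} (U B : Matrix (Fin n) (Fin n) ℝ) (hU : star U * U = 1) :
    Matrix.trace (U * B * star U) = Matrix.trace B := by
  rw [Matrix.trace_mul_comm, ← mul_assoc, hU, one_mul]

lemma stmt10_trace_inv_eig {n : ℕ} (M : Matrix (Fin n) (Fin n) ℝ) (hM : M.PosSemidef)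
    (c : ℝ) (hc : 0 ≤ c) :
    Matrix.trace ((1 + c • M)⁻¹)
      = ∑ i, (1 + c * hM.1.eigenvalues i)⁻¹ := by
  set U : Matrix (Fin n) (Fin n) ℝ := (hM.1.eigenvectorUnitary : Matrix (Fin n) (Fin n) ℝ)
    with hUdef
  have hU : U * star U = 1 := Matrix.mem_unitaryGroup_iff.mp hM.1.eigenvectorUnitary.2
  have hU' : star U * U = 1 := Matrix.mem_unitaryGroup_iff'.mp hM.1.eigenvectorUnitary.2
  have hpos : ∀ i, (0:ℝ) < 1 + c * hM.1.eigenvalues i := fun i => by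
    have := hM.eigenvalues_nonneg i
    nlinarith
  have hspec : M = U * Matrix.diagonal hM.1.eigenvalues * star U := by
    have := hM.1.spectral_theorem
    simpa using this
  have hA : 1 + c • M = U * Matrix.diagonal (fun i => 1 + c * hM.1.eigenvalues i) * star U := by
    conv_lhs => rw [hspec]
    have : (Matrix.diagonal (fun i => 1 + c * hM.1.eigenvalues i) : Matrix (Fin n) (Fin n) ℝ)
        = 1 + c • Matrix.diagonal hM.1.eigenvalues := by
      rw [← Matrix.diagonal_one, ← Matrix.diagonal_smul, ← Matrix.diagonal_add]
      rfl
    rw [this]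
    simp only [Matrix.add_mul, Matrix.mul_add, Matrix.one_mul, Matrix.mul_one, hU,
      Matrix.smul_mul, Matrix.mul_smul]
  have hinv : (1 + c • M)⁻¹
      = U * Matrix.diagonal (fun i => (1 + c * hM.1.eigenvalues i)⁻¹) * star U := by
    apply Matrix.inv_eq_right_inv
    rw [hA]
    calc (U * Matrix.diagonal (fun i => 1 + c * hM.1.eigenvalues i) * star U) *
          (U * Matrix.diagonal (fun i => (1 + c * hM.1.eigenvalues i)⁻¹) * star U)
        = U * (Matrix.diagonal (fun i => 1 + c * hM.1.eigenvalues i) * ((star U * U) *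
            Matrix.diagonal (fun i => (1 + c * hM.1.eigenvalues i)⁻¹))) * star U := by
          simp only [Matrix.mul_assoc]
      _ = 1 := by
          rw [hU', one_mul, Matrix.diagonal_mul_diagonal]
          have : (fun i => (1 + c * hM.1.eigenvalues i) * (1 + c * hM.1.eigenvalues i)⁻¹)
              = fun _ => (1:ℝ) := by
            funext i; exact mul_inv_cancel₀ (hpos i).ne'
          rw [this, Matrix.diagonal_one, Matrix.mul_one, hU]
  rw [hinv, stmt10_trace_conj _ _ hU', Matrix.trace_diagonal]

lemma stmt10_trace_eq_sum_eig {n : ℕ} (M : Matrix (Fin n) (Fin n) ℝ) (hM : M.IsHermitian) :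
    Matrix.trace M = ∑ i, hM.eigenvalues i := by
  have hU' : star (hM.eigenvectorUnitary : Matrix (Fin n) (Fin n) ℝ) * hM.eigenvectorUnitary = 1 :=
    Matrix.mem_unitaryGroup_iff'.mp hM.eigenvectorUnitary.2
  have hspec : M = hM.eigenvectorUnitary * Matrix.diagonal hM.eigenvalues
      * star (hM.eigenvectorUnitary : Matrix (Fin n) (Fin n) ℝ) := by
    have := hM.spectral_theorem
    simpa using this
  conv_lhs => rw [hspec]
  rw [stmt10_trace_conj _ _ hU', Matrix.trace_diagonal]

lemma stmt10_sum_if_lt (k n : ℕ) (hkn : k ≤ n) (a b : ℝ) :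
    ∑ j : Fin n, (if (j:ℕ) < k then a else b) = k * a + ((n:ℝ) - k) * b := by
  rw [Fin.sum_univ_eq_sum_range (fun j => if j < k then a else b) n]
  rw [Finset.range_eq_Ico, ← Finset.sum_Ico_consecutive _ (Nat.zero_le k) hkn]
  have h1 : ∑ j ∈ Finset.Ico 0 k, (if j < k then a else b) = k * a := by
    rw [Finset.sum_congr rfl fun j hj => if_pos (Finset.mem_Ico.mp hj).2]
    simp [mul_comm]
  have h2 : ∑ j ∈ Finset.Ico k n, (if j < k then a else b) = ((n:ℝ) - k) * b := by
    rw [Finset.sum_congr rfl fun j hj => if_neg (not_lt.mpr (Finset.mem_Ico.mp hj).1)]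
    rw [Finset.sum_const, Nat.card_Ico, nsmul_eq_mul, Nat.cast_sub hkn]
  rw [h1, h2]

lemma stmt10_key_ineq {n k : ℕ} (σ : ℝ) (hσ : 0 < σ) (lam : Fin n → ℝ) (h0 : ∀ i, 0 ≤ lam i)
    (hcard : Fintype.card {i // lam i ≠ 0} ≤ k)
    (hsum : ∑ i, lam i ≤ k) :
    (n:ℝ) - (k:ℝ)/(1+σ^2) ≤ ∑ i, (1 + (σ^2)⁻¹ * lam i)⁻¹ := by
  classical
  set c : ℝ := (σ^2)⁻¹ with hc
  have hcpos : 0 < c := by positivity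
  set S : Finset (Fin n) := Finset.univ.filter (fun i => lam i ≠ 0) with hS
  have hcardS : ((S.card : ℕ) : ℝ) ≤ k := by
    have h := le_trans (le_of_eq (Fintype.card_subtype (fun i => lam i ≠ 0)).symm) hcard
    exact_mod_cast h
  set s : ℝ := ((S.card : ℕ) : ℝ) with hs
  have hsnn : 0 ≤ s := by positivity
  set T : ℝ := ∑ i ∈ S, lam i with hT
  have hTtot : T = ∑ i, lam i := Finset.sum_filter_ne_zero _
  have hTk : T ≤ k := by rw [hTtot]; exact hsum
  have hTnn : 0 ≤ T := Finset.sum_nonneg fun i _ => h0 i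
  have hsplit : ∑ i, (1 + c * lam i)⁻¹
      = ∑ i ∈ S, (1 + c * lam i)⁻¹ + ∑ i ∈ Sᶜ, (1 + c * lam i)⁻¹ :=
    (Finset.sum_add_sum_compl S _).symm
  have hcompl : ∑ i ∈ Sᶜ, (1 + c * lam i)⁻¹ = (n : ℝ) - s := by
    have hall : ∀ i ∈ Sᶜ, (1 + c * lam i)⁻¹ = 1 := by
      intro i hi
      have hmem := Finset.mem_compl.mp hi
      rw [hS, Finset.mem_filter] at hmem
      push_neg at hmem
      have hzero : lam i = 0 := hmem (Finset.mem_univ i)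
      rw [hzero]
      norm_num
    have hle : S.card ≤ n := le_trans (Finset.card_le_univ S) (by simp)
    rw [Finset.sum_congr rfl hall, Finset.sum_const, nsmul_eq_mul, mul_one,
      Finset.card_compl, Fintype.card_fin, Nat.cast_sub hle]
  have hgpos : ∀ i ∈ S, (0:ℝ) < 1 + c * lam i := by
    intro i _
    have := h0 i
    nlinarith
  have hCS : s^2 / (s + c * T) ≤ ∑ i ∈ S, (1 + c * lam i)⁻¹ := by
    have e1 : ∑ i ∈ S, (1:ℝ) = s := by simp [hs]
    have e2 : ∑ i ∈ S, (1 + c * lam i) = s + c * T := by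
      rw [Finset.sum_add_distrib, ← Finset.mul_sum, e1]
    have e3 : ∀ i ∈ S, ((1:ℝ))^2 / (1 + c * lam i) = (1 + c * lam i)⁻¹ := by
      intro i hi; rw [one_pow, one_div]
    calc s^2 / (s + c*T) = (∑ i ∈ S, (1:ℝ))^2 / ∑ i ∈ S, (1 + c * lam i) := by rw [e1, e2]
      _ ≤ ∑ i ∈ S, ((1:ℝ))^2 / (1 + c * lam i) := Finset.sq_sum_div_le_sum_sq_div S _ hgpos
      _ = ∑ i ∈ S, (1 + c * lam i)⁻¹ := Finset.sum_congr rfl e3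
  have hfin : (n:ℝ) - (k:ℝ)/(1+σ^2) ≤ (n:ℝ) - s + s^2/(s + c*T) := by
    have hk0 : (0:ℝ) ≤ (k:ℝ)/(1+σ^2) := by positivity
    rcases eq_or_lt_of_le hsnn with h | h
    · rw [← h]
      norm_num
      linarith
    · have hden : 0 < s + c * T := by nlinarith [mul_nonneg hcpos.le hTnn]
      have key : s - s^2/(s + c*T) ≤ (k:ℝ)/(1+σ^2) := by
        have heq : s - s^2/(s+c*T) = (s*c*T)/(s+c*T) := by
          field_simp
          ring
        rw [heq, div_le_div_iff₀ hden (by positivity)]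
        have h1 : s * T ≤ (k:ℝ) * s := by
          calc s * T ≤ s * k := mul_le_mul_of_nonneg_left hTk hsnn
            _ = (k:ℝ) * s := mul_comm _ _
        have h2 : s * c * T ≤ (k:ℝ) * c * T :=
          mul_le_mul_of_nonneg_right (mul_le_mul_of_nonneg_right hcardS hcpos.le) hTnn
        have h3 : s * c * T * σ ^ 2 = s * T := by
          rw [hc]; field_simp
        have hexp : s*c*T*(1+σ^2) = s*c*T + s*c*T*σ^2 := by ring
        rw [hexp, h3]
        linarith
      linarith
  calc (n:ℝ) - (k:ℝ)/(1+σ^2) ≤ (n:ℝ) - s + s^2/(s + c*T) := hfin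
    _ ≤ (∑ i ∈ S, (1 + c * lam i)⁻¹) + ((n:ℝ) - s) := by linarith
    _ = ∑ i, (1 + c * lam i)⁻¹ := by rw [hsplit, hcompl]

lemma stmt10_lower_bound {n k : ℕ} (σ : ℝ) (hσ : 0 < σ) (M : Matrix (Fin n) (Fin n) ℝ)
    (hM : M.PosSemidef) (hrank : M.rank ≤ k) (htr : M.trace ≤ (k : ℝ)) :
    (n : ℝ) - (k : ℝ) / (1 + σ ^ 2) ≤ Matrix.trace ((1 + (σ ^ 2)⁻¹ • M)⁻¹) := by
  rw [stmt10_trace_inv_eig M hM ((σ^2)⁻¹) (by positivity)]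
  apply stmt10_key_ineq σ hσ _ (fun i => hM.eigenvalues_nonneg i)
  · rw [← hM.1.rank_eq_card_non_zero_eigs]
    exact hrank
  · rw [← stmt10_trace_eq_sum_eig M hM.1]
    exact htr

lemma stmt10_optMat_mul (k n : ℕ) :
    (optMatLt k n)ᵀ * optMatLt k n
      = Matrix.diagonal (fun j : Fin n => if (j:ℕ) < k then (1:ℝ) else 0) := by
  ext j j'
  simp only [Matrix.mul_apply, Matrix.transpose_apply, optMatLt, Matrix.of_apply,
    Matrix.diagonal_apply]
  by_cases hjj : j = j'
  · subst hjj
    by_cases hj : (j:ℕ) < k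
    · rw [Finset.sum_eq_single (⟨(j:ℕ), hj⟩ : Fin k)]
      · simp [hj]
      · intro i _ hi
        have : (i:ℕ) ≠ (j:ℕ) := by
          intro h
          apply hi
          exact Fin.ext h
        simp [this]
      · simp
    · rw [if_pos rfl, if_neg hj]
      apply Finset.sum_eq_zero
      intro i _
      have : (i:ℕ) ≠ (j:ℕ) := by
        intro h
        exact hj (h ▸ i.2)
      simp [this]
  · rw [if_neg hjj]
    apply Finset.sum_eq_zero
    intro i _
    by_cases h1 : (i:ℕ) = (j:ℕ)
    · have h2 : (i:ℕ) ≠ (j':ℕ) := by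
        intro h
        exact hjj (Fin.ext (h1 ▸ h ▸ rfl))
      simp [h2]
    · simp [h1]

lemma stmt10_optMat_trace (k n : ℕ) (hkn : k ≤ n) :
    Matrix.trace ((optMatLt k n)ᵀ * optMatLt k n) = (k:ℝ) := by
  rw [stmt10_optMat_mul, Matrix.trace_diagonal, stmt10_sum_if_lt k n hkn]
  ring

lemma stmt10_optMat_inv_trace (k n : ℕ) (hkn : k ≤ n) (σ : ℝ) (hσ : 0 < σ) :
    Matrix.trace ((1 + (σ ^ 2)⁻¹ • ((optMatLt k n)ᵀ * optMatLt k n))⁻¹)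
      = (n : ℝ) - (k : ℝ) / (1 + σ ^ 2) := by
  set c : ℝ := (σ^2)⁻¹ with hc
  have hcpos : 0 < c := by positivity
  rw [stmt10_optMat_mul]
  set d : Fin n → ℝ := fun j => if (j:ℕ) < k then (1:ℝ) else 0 with hd
  have hpos : ∀ j, (0:ℝ) < 1 + c * d j := by
    intro j
    rw [hd]
    dsimp only
    split_ifs <;> nlinarith
  have hdiag : 1 + c • Matrix.diagonal d = Matrix.diagonal (fun j => 1 + c * d j) := by
    rw [← Matrix.diagonal_one, ← Matrix.diagonal_smul, ← Matrix.diagonal_add]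
    rfl
  have hinv : (1 + c • Matrix.diagonal d)⁻¹ = Matrix.diagonal (fun j => (1 + c * d j)⁻¹) := by
    apply Matrix.inv_eq_right_inv
    rw [hdiag, Matrix.diagonal_mul_diagonal]
    have : (fun j => (1 + c * d j) * (1 + c * d j)⁻¹) = fun _ => (1:ℝ) := by
      funext j; exact mul_inv_cancel₀ (hpos j).ne'
    rw [this, Matrix.diagonal_one]
  rw [hinv, Matrix.trace_diagonal]
  have hterm : ∀ j : Fin n, (1 + c * d j)⁻¹ = if (j:ℕ) < k then (1+c)⁻¹ else 1 := by
    intro j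
    rw [hd]
    dsimp only
    split_ifs <;> norm_num
  rw [Finset.sum_congr rfl fun j _ => hterm j, stmt10_sum_if_lt k n hkn]
  rw [hc]
  have h1 : (0:ℝ) < σ^2 := by positivity
  field_simp
  ring

end Aux

/-- For positive integers `k < n` and `σ > 0`,
`inf{ Tr((Iₙ + σ⁻²HᵀH)⁻¹) : H ∈ ℝ^{k×n}, Tr(HᵀH) ≤ k } = n − k/(1+σ²)`, attained by
`H = [I_k 0]`; moreover every positive semidefinite `n×n` matrix `M` with `rank(M) ≤ k` and
`Tr(M) ≤ k` satisfies `Tr((Iₙ + σ⁻²M)⁻¹) ≥ n − k/(1+σ²)`. -/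
theorem stmt10 (k n : ℕ) (hk : 0 < k) (hkn : k < n) (σ : ℝ) (hσ : 0 < σ) :
    sInf {v : ℝ | ∃ H : Matrix (Fin k) (Fin n) ℝ,
        Matrix.trace (Hᵀ * H) ≤ (k : ℝ) ∧
        v = Matrix.trace ((1 + (σ ^ 2)⁻¹ • (Hᵀ * H))⁻¹)}
      = (n : ℝ) - (k : ℝ) / (1 + σ ^ 2) ∧
    Matrix.trace ((optMatLt k n)ᵀ * optMatLt k n) ≤ (k : ℝ) ∧
    Matrix.trace ((1 + (σ ^ 2)⁻¹ • ((optMatLt k n)ᵀ * optMatLt k n))⁻¹)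
      = (n : ℝ) - (k : ℝ) / (1 + σ ^ 2) ∧
    ∀ M : Matrix (Fin n) (Fin n) ℝ, M.PosSemidef → M.rank ≤ k → M.trace ≤ (k : ℝ) →
      (n : ℝ) - (k : ℝ) / (1 + σ ^ 2) ≤ Matrix.trace ((1 + (σ ^ 2)⁻¹ • M)⁻¹) := by
  have hkn' : k ≤ n := hkn.le
  have htr0 : Matrix.trace ((optMatLt k n)ᵀ * optMatLt k n) = (k:ℝ) :=
    stmt10_optMat_trace k n hkn'
  have hval0 : Matrix.trace ((1 + (σ ^ 2)⁻¹ • ((optMatLt k n)ᵀ * optMatLt k n))⁻¹)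
      = (n : ℝ) - (k : ℝ) / (1 + σ ^ 2) := stmt10_optMat_inv_trace k n hkn' σ hσ
  set B : ℝ := (n : ℝ) - (k : ℝ) / (1 + σ ^ 2) with hB
  set Sv : Set ℝ := {v : ℝ | ∃ H : Matrix (Fin k) (Fin n) ℝ,
      Matrix.trace (Hᵀ * H) ≤ (k : ℝ) ∧
      v = Matrix.trace ((1 + (σ ^ 2)⁻¹ • (Hᵀ * H))⁻¹)} with hSv
  have hmem : B ∈ Sv := ⟨optMatLt k n, le_of_eq htr0, hval0.symm⟩
  have hlb : ∀ v ∈ Sv, B ≤ v := by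
    rintro v ⟨H, htr, rfl⟩
    have hHt : Hᵀ = Hᴴ := (Matrix.conjTranspose_eq_transpose_of_trivial H).symm
    have hpsd : (Hᵀ * H).PosSemidef := by
      rw [hHt]
      exact Matrix.posSemidef_conjTranspose_mul_self H
    have hrank : (Hᵀ * H).rank ≤ k := by
      rw [Matrix.rank_transpose_mul_self]
      have := Matrix.rank_le_card_height H
      simpa using this
    exact stmt10_lower_bound σ hσ _ hpsd hrank htr
  refine ⟨le_antisymm (csInf_le ⟨B, hlb⟩ hmem) (le_csInf ⟨B, hmem⟩ hlb),
    le_of_eq htr0, hval0, ?_⟩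
  intro M hM hrank htrM
  exact stmt10_lower_bound σ hσ M hM hrank htrM
end

section
/- For R > 0 and u > 0 define Ψ_R(u) = (1/2)·( 1 − R − u + √( (1 − R)² + 2(1 + R)u + u² ) ). Then: (i) for R > 1, sup_{u > 0} Ψ_R(u)/u = 1/(R − 1), i.e., Ψ_R(u) ≤ u/(R−1) for all u > 0 and Ψ_R(u)/u → 1/(R−1) as u → 0+; (ii) for 0 < R ≤ 1, sup_{u > 0} Ψ_R(u)/u = +∞. -/
open Filter Real
open scoped Topology

/-- `Ψ_R(u) = ½(1 − R − u + √((1−R)² + 2(1+R)u + u²))`, the asymptotic distortion of random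
linear encoding of a unit-variance Gaussian source at measurement rate `R` and noise
variance `u`. -/
noncomputable def Psi (R u : ℝ) : ℝ :=
  (1 / 2) * (1 - R - u + Real.sqrt ((1 - R) ^ 2 + 2 * (1 + R) * u + u ^ 2))

lemma psi_key (R u : ℝ) (hR : 0 < R) (hu : 0 < u) :
    (0 < Real.sqrt ((1 - R) ^ 2 + 2 * (1 + R) * u + u ^ 2) + (R - 1) + u) ∧
    Real.sqrt ((1 - R) ^ 2 + 2 * (1 + R) * u + u ^ 2) + (R - 1) ≥ 0 ∧
    Psi R u / u = 2 / (Real.sqrt ((1 - R) ^ 2 + 2 * (1 + R) * u + u ^ 2) + (R - 1) + u) := by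
  set A : ℝ := (1 - R) ^ 2 + 2 * (1 + R) * u + u ^ 2 with hA
  have hA0 : 0 ≤ A := by positivity
  have hs2 : Real.sqrt A ^ 2 = A := Real.sq_sqrt hA0
  have hsge : Real.sqrt A ≥ -(R - 1) := by
    have h1 : Real.sqrt ((1 - R) ^ 2) ≤ Real.sqrt A := by
      apply Real.sqrt_le_sqrt; nlinarith
    have h2 : |1 - R| ≤ Real.sqrt A := by rwa [Real.sqrt_sq_eq_abs] at h1
    have := neg_abs_le (1 - R)
    linarith [le_abs_self (1 - R)]
  have hd0 : 0 ≤ Real.sqrt A + (R - 1) := by linarith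
  have hd : 0 < Real.sqrt A + (R - 1) + u := by linarith
  refine ⟨hd, hd0, ?_⟩
  rw [div_eq_div_iff hu.ne' hd.ne']
  unfold Psi
  rw [← hA]
  nlinarith [hs2]

/-- (i) For `R > 1`: `Ψ_R(u) ≤ u/(R−1)` for every `u > 0`,
`Ψ_R(u)/u → 1/(R−1)` as `u → 0⁺`, and `sup_{u>0} Ψ_R(u)/u = 1/(R−1)`;
(ii) for `0 < R ≤ 1`, `sup_{u>0} Ψ_R(u)/u = +∞` (the set of values is unbounded above). -/
theorem stmt18 :
    (∀ R : ℝ, 1 < R →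
      (∀ u : ℝ, 0 < u → Psi R u ≤ u / (R - 1)) ∧
      Filter.Tendsto (fun u : ℝ => Psi R u / u) (𝓝[>] 0) (nhds (1 / (R - 1))) ∧
      IsLUB {y : ℝ | ∃ u : ℝ, 0 < u ∧ y = Psi R u / u} (1 / (R - 1))) ∧
    (∀ R : ℝ, 0 < R → R ≤ 1 →
      ¬ BddAbove {y : ℝ | ∃ u : ℝ, 0 < u ∧ y = Psi R u / u}) := by
  constructor
  · intro R hR
    have hR0 : 0 < R := by linarith
    have hR1 : 0 < R - 1 := by linarith
    -- the ratio bound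
    have hub : ∀ u : ℝ, 0 < u → Psi R u / u ≤ 1 / (R - 1) := by
      intro u hu
      obtain ⟨hd, hd0, heq⟩ := psi_key R u hR0 hu
      rw [heq]
      have hsge : Real.sqrt ((1 - R) ^ 2 + 2 * (1 + R) * u + u ^ 2) ≥ R - 1 := by
        have h1 : Real.sqrt ((1 - R) ^ 2) ≤ Real.sqrt ((1 - R) ^ 2 + 2 * (1 + R) * u + u ^ 2) := by
          apply Real.sqrt_le_sqrt; nlinarith
        rw [Real.sqrt_sq_eq_abs] at h1
        calc R - 1 ≤ |1 - R| := by rw [abs_sub_comm]; exact le_abs_self _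
        _ ≤ _ := h1
      rw [div_le_div_iff₀ hd hR1]
      nlinarith
    have hle : ∀ u : ℝ, 0 < u → Psi R u ≤ u / (R - 1) := by
      intro u hu
      have := hub u hu
      rw [div_le_div_iff₀ hu hR1] at this
      rw [le_div_iff₀ hR1]
      nlinarith
    -- limit
    have hlim : Filter.Tendsto (fun u : ℝ => Psi R u / u) (𝓝[>] 0) (nhds (1 / (R - 1))) := by
      have hcont : ContinuousAt (fun u : ℝ =>
          2 / (Real.sqrt ((1 - R) ^ 2 + 2 * (1 + R) * u + u ^ 2) + (R - 1) + u)) 0 := by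
        have hden : Continuous (fun u : ℝ =>
            Real.sqrt ((1 - R) ^ 2 + 2 * (1 + R) * u + u ^ 2) + (R - 1) + u) := by
          have h1 : Continuous fun u : ℝ => (1 - R) ^ 2 + 2 * (1 + R) * u + u ^ 2 := by
            continuity
          exact ((Real.continuous_sqrt.comp h1).add continuous_const).add continuous_id
        apply ContinuousAt.div continuousAt_const hden.continuousAt
        · have : Real.sqrt ((1 - R) ^ 2 + 2 * (1 + R) * 0 + 0 ^ 2) = R - 1 := by
            rw [show (1 - R) ^ 2 + 2 * (1 + R) * 0 + 0 ^ 2 = (R - 1) ^ 2 by ring,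
              Real.sqrt_sq hR1.le]
          rw [this]; positivity
      have hval : 2 / (Real.sqrt ((1 - R) ^ 2 + 2 * (1 + R) * 0 + 0 ^ 2) + (R - 1) + 0)
          = 1 / (R - 1) := by
        rw [show (1 - R) ^ 2 + 2 * (1 + R) * 0 + 0 ^ 2 = (R - 1) ^ 2 by ring,
          Real.sqrt_sq hR1.le]
        field_simp
        ring
      have := hcont.tendsto.mono_left (nhdsWithin_le_nhds (s := Set.Ioi (0:ℝ)))
      rw [hval] at this
      apply this.congr'
      filter_upwards [self_mem_nhdsWithin] with u hu
      exact ((psi_key R u hR0 hu).2.2).symm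
    refine ⟨hle, hlim, ?_, ?_⟩
    · rintro y ⟨u, hu, rfl⟩
      exact hub u hu
    · intro b hb
      refine le_of_tendsto hlim ?_
      filter_upwards [self_mem_nhdsWithin] with u hu
      exact hb ⟨u, hu, rfl⟩
  · intro R hR0 hR1 ⟨b, hb⟩
    set c : ℝ := max b 1 with hc
    have hc1 : 1 ≤ c := le_max_right _ _
    have hc0 : 0 < c := by linarith
    set u : ℝ := 1 / (4 * c ^ 2) with hu
    have hupos : 0 < u := by positivity
    have ht : Real.sqrt u = 1 / (2 * c) := by
      rw [hu, show 1 / (4 * c ^ 2) = (1 / (2 * c)) ^ 2 by field_simp; ring,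
        Real.sqrt_sq (by positivity)]
    obtain ⟨hd, hd0, heq⟩ := psi_key R u hR0 hupos
    -- upper bound on sqrt A
    have hkey : Real.sqrt ((1 - R) ^ 2 + 2 * (1 + R) * u + u ^ 2)
        ≤ (1 - R) + 2 * Real.sqrt u + u := by
      have ht2 : Real.sqrt u ^ 2 = u := Real.sq_sqrt hupos.le
      have htpos : 0 < Real.sqrt u := Real.sqrt_pos.mpr hupos
      have hrhs : 0 ≤ (1 - R) + 2 * Real.sqrt u + u := by nlinarith
      have h1 : (1 - R) ^ 2 + 2 * (1 + R) * u + u ^ 2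
          ≤ ((1 - R) + 2 * Real.sqrt u + u) ^ 2 := by nlinarith
      calc Real.sqrt ((1 - R) ^ 2 + 2 * (1 + R) * u + u ^ 2)
          ≤ Real.sqrt (((1 - R) + 2 * Real.sqrt u + u) ^ 2) := Real.sqrt_le_sqrt h1
        _ = (1 - R) + 2 * Real.sqrt u + u := Real.sqrt_sq hrhs
    have hdle : Real.sqrt ((1 - R) ^ 2 + 2 * (1 + R) * u + u ^ 2) + (R - 1) + u
        ≤ 2 * Real.sqrt u + 2 * u := by linarith
    have hratio : 1 / (Real.sqrt u + u) ≤ Psi R u / u := by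
      rw [heq]
      rw [show (2 : ℝ) / (Real.sqrt ((1 - R) ^ 2 + 2 * (1 + R) * u + u ^ 2) + (R - 1) + u)
        = 2 / (Real.sqrt ((1 - R) ^ 2 + 2 * (1 + R) * u + u ^ 2) + (R - 1) + u) from rfl]
      have htpos : 0 < Real.sqrt u := Real.sqrt_pos.mpr hupos
      rw [div_le_div_iff₀ (by positivity) hd]
      nlinarith
    have hgt : c < 1 / (Real.sqrt u + u) := by
      have hsum : Real.sqrt u + u < 1 / c := by
        rw [ht, hu, div_add_div _ _ (by positivity : (2*c:ℝ) ≠ 0).symm.symm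
          (by positivity : (4*c^2:ℝ) ≠ 0).symm.symm,
          div_lt_div_iff₀ (by positivity) hc0]
        nlinarith
      have hpos : 0 < Real.sqrt u + u := by
        have := Real.sqrt_nonneg u; linarith
      have := one_div_lt_one_div_of_lt hpos hsum
      rwa [one_div_one_div] at this
    have hmem : Psi R u / u ≤ b := hb ⟨u, hupos, rfl⟩
    have : c < b := lt_of_lt_of_le (lt_of_lt_of_le hgt hratio) hmem
    exact absurd this (not_lt.mpr (le_max_left _ _))
end
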